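/- arXiv:2509.17382 — 2 statements merged into one kernel-verified Lean document; each statement's English description precedes it below -/
import Mathlib

section
/- Let $Y = X^* + Z$ with $X^*, Z \in \mathbb{R}^{m \times n}$, and let $Y_{(r)}$ and $X^*_{(r)}$ denote the rank-$r$ truncated SVDs of $Y$ and $X^*$ respectively. Then $\|Y_{(r)} - X^*\|_{\mathrm{F}} \le (2+\sqrt{2})\left(\sqrt{r}\,\|Z\| + \xi_{(r)}\right)$, where $\xi_{(r)} = \|X^*_{(r)} - X^*\|_{\mathrm{F}} = \sqrt{\sum_{i=r+1}^{\min\{m,n\}} \sigma_i^2(X^*)}$ and $\|Z\|$ is the operator norm of $Z$. -/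
open Matrix BigOperators Finset

/-- The `i`-th largest singular value (0-indexed) of a real matrix. -/
noncomputable def sv {m n : Type*} [Fintype m] [Fintype n] [DecidableEq n]
    (M : Matrix m n ℝ) (i : ℕ) : ℝ :=
  if hi : i < Fintype.card n then
    let ev : Fin (Fintype.card n) → ℝ :=
      (Matrix.isHermitian_conjTranspose_mul_self M).eigenvalues ∘ (Fintype.equivFin n).symm
    Real.sqrt ((ev ∘ Tuple.sort ev) (Fin.rev ⟨i, hi⟩))
  else 0

/-- Frobenius norm of a real matrix. -/
noncomputable def frob {m n : Type*} [Fintype m] [Fintype n]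
    (M : Matrix m n ℝ) : ℝ :=
  Real.sqrt (∑ i, ∑ j, (M i j) ^ 2)

/-- Rectangular diagonal matrix of singular values of `M`. -/
noncomputable def svdDiag {m n : ℕ} (M : Matrix (Fin m) (Fin n) ℝ) :
    Matrix (Fin m) (Fin n) ℝ :=
  Matrix.of fun i j => if (i : ℕ) = (j : ℕ) then sv M (i : ℕ) else 0

/-- Rectangular diagonal matrix keeping only the top `r` singular values of `M`. -/
noncomputable def svdDiagTrunc {m n : ℕ} (r : ℕ) (M : Matrix (Fin m) (Fin n) ℝ) :
    Matrix (Fin m) (Fin n) ℝ :=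
  Matrix.of fun i j => if (i : ℕ) = (j : ℕ) ∧ (i : ℕ) < r then sv M (i : ℕ) else 0

namespace TSVD

variable {m n : ℕ}

noncomputable def ip (A B : Matrix (Fin m) (Fin n) ℝ) : ℝ := ∑ i, ∑ j, A i j * B i j

lemma ip_eq_trace (A B : Matrix (Fin m) (Fin n) ℝ) : ip A B = Matrix.trace (Aᵀ * B) := by
  simp only [ip, Matrix.trace, Matrix.diag, Matrix.mul_apply, Matrix.transpose_apply]
  rw [Finset.sum_comm]

lemma ip_mul_left (M : Matrix (Fin m) (Fin m) ℝ) (A B : Matrix (Fin m) (Fin n) ℝ) :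
    ip (M * A) B = ip A (Mᵀ * B) := by
  rw [ip_eq_trace, ip_eq_trace, Matrix.transpose_mul, Matrix.mul_assoc]

lemma ip_mul_right (N : Matrix (Fin n) (Fin n) ℝ) (A B : Matrix (Fin m) (Fin n) ℝ) :
    ip (A * N) B = ip A (B * Nᵀ) := by
  rw [ip_eq_trace, ip_eq_trace, Matrix.transpose_mul, Matrix.mul_assoc,
    Matrix.trace_mul_comm, Matrix.mul_assoc]

lemma ip_comm (A B : Matrix (Fin m) (Fin n) ℝ) : ip A B = ip B A := by
  simp only [ip, mul_comm]

lemma ip_add_left (A B C : Matrix (Fin m) (Fin n) ℝ) : ip (A + B) C = ip A C + ip B C := by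
  simp [ip, Matrix.add_apply, add_mul, Finset.sum_add_distrib]

lemma ip_sub_left (A B C : Matrix (Fin m) (Fin n) ℝ) : ip (A - B) C = ip A C - ip B C := by
  simp [ip, Matrix.sub_apply, sub_mul, Finset.sum_sub_distrib]

lemma ip_sub_right (A B C : Matrix (Fin m) (Fin n) ℝ) : ip A (B - C) = ip A B - ip A C := by
  rw [ip_comm, ip_sub_left, ip_comm B, ip_comm C]

lemma ip_add_right (A B C : Matrix (Fin m) (Fin n) ℝ) : ip A (B + C) = ip A B + ip A C := by
  rw [ip_comm, ip_add_left, ip_comm B, ip_comm C]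

lemma ip_self_nonneg (A : Matrix (Fin m) (Fin n) ℝ) : 0 ≤ ip A A :=
  Finset.sum_nonneg fun _ _ => Finset.sum_nonneg fun _ _ => mul_self_nonneg _

lemma frob_eq (A : Matrix (Fin m) (Fin n) ℝ) : frob A = Real.sqrt (ip A A) := by
  simp [frob, ip, sq]

lemma frob_nonneg (A : Matrix (Fin m) (Fin n) ℝ) : 0 ≤ frob A := Real.sqrt_nonneg _

lemma frob_sq (A : Matrix (Fin m) (Fin n) ℝ) : frob A ^ 2 = ip A A := by
  rw [frob_eq, Real.sq_sqrt (ip_self_nonneg A)]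

lemma frob_sq_eq (A : Matrix (Fin m) (Fin n) ℝ) : frob A ^ 2 = ∑ i, ∑ j, (A i j) ^ 2 := by
  rw [frob_sq]; simp [ip, sq]

lemma ip_le (A B : Matrix (Fin m) (Fin n) ℝ) : ip A B ≤ frob A * frob B := by
  have h1 : ip A B = ∑ p : Fin m × Fin n, A p.1 p.2 * B p.1 p.2 := by
    simp only [ip]; exact (Fintype.sum_prod_type (f := fun p => A p.1 p.2 * B p.1 p.2)).symm
  have h2 : frob A = Real.sqrt (∑ p : Fin m × Fin n, (A p.1 p.2) ^ 2) := by
    simp only [frob]; congr 1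
    exact (Fintype.sum_prod_type (f := fun p => (A p.1 p.2) ^ 2)).symm
  have h3 : frob B = Real.sqrt (∑ p : Fin m × Fin n, (B p.1 p.2) ^ 2) := by
    simp only [frob]; congr 1
    exact (Fintype.sum_prod_type (f := fun p => (B p.1 p.2) ^ 2)).symm
  rw [h1, h2, h3]
  exact Real.sum_mul_le_sqrt_mul_sqrt _ _ _

lemma ip_neg_right (A B : Matrix (Fin m) (Fin n) ℝ) : ip A (-B) = - ip A B := by
  simp [ip, Matrix.neg_apply, Finset.sum_neg_distrib]

lemma frob_neg (A : Matrix (Fin m) (Fin n) ℝ) : frob (-A) = frob A := by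
  simp [frob, Matrix.neg_apply]

lemma frob_sub_sq (A B : Matrix (Fin m) (Fin n) ℝ) :
    frob (A - B) ^ 2 = frob A ^ 2 - 2 * ip A B + frob B ^ 2 := by
  rw [frob_sq, frob_sq, frob_sq, ip_sub_left, ip_sub_right, ip_sub_right, ip_comm B A]
  ring

lemma frob_triangle_sub (A B : Matrix (Fin m) (Fin n) ℝ) : frob (A - B) ≤ frob A + frob B := by
  have h : frob (A - B) ^ 2 ≤ (frob A + frob B) ^ 2 := by
    rw [frob_sub_sq]
    have := ip_le A B
    have h2 := ip_le A B
    have hab : -(frob A * frob B) ≤ ip A B := by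
      have h3 := ip_le A (-B)
      rw [ip_neg_right, frob_neg] at h3
      linarith
    nlinarith [frob_nonneg A, frob_nonneg B]
  have h0 := frob_nonneg (A - B)
  nlinarith [frob_nonneg A, frob_nonneg B]


lemma frob_mul_orthL {U : Matrix (Fin m) (Fin m) ℝ} (hU : Uᵀ * U = 1)
    (A : Matrix (Fin m) (Fin n) ℝ) : frob (U * A) = frob A := by
  rw [frob_eq, frob_eq A, ip_mul_left, ← Matrix.mul_assoc, hU, Matrix.one_mul]

lemma frob_mul_orthR {V : Matrix (Fin n) (Fin n) ℝ} (hV : Vᵀ * V = 1)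
    (A : Matrix (Fin m) (Fin n) ℝ) : frob (A * Vᵀ) = frob A := by
  rw [frob_eq, frob_eq A, ip_mul_right, Matrix.transpose_transpose, Matrix.mul_assoc, hV,
    Matrix.mul_one]

/-- Pythagoras for a symmetric idempotent `P`. -/
lemma frob_pythagoras {P : Matrix (Fin m) (Fin m) ℝ} (hPt : Pᵀ = P) (hPP : P * P = P)
    (M : Matrix (Fin m) (Fin n) ℝ) :
    frob M ^ 2 = frob (P * M) ^ 2 + frob (M - P * M) ^ 2 := by
  have hcross : ip (P * M) (M - P * M) = 0 := by
    rw [ip_mul_left, hPt, Matrix.mul_sub, ← Matrix.mul_assoc, hPP, sub_self]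
    simp [ip]
  have hM : M = P * M + (M - P * M) := by abel
  rw [frob_sq, frob_sq, frob_sq]
  calc ip M M = ip (P * M + (M - P * M)) (P * M + (M - P * M)) := by rw [← hM]
    _ = ip (P * M) (P * M) + ip (M - P * M) (M - P * M) := by
        rw [ip_add_left, ip_add_right, ip_add_right, hcross, ip_comm (M - P * M) (P * M), hcross]
        ring

/-- The diagonal 0/1 matrix with ones on the first `r` diagonal entries. -/
noncomputable def Jmat (k r : ℕ) : Matrix (Fin k) (Fin k) ℝ :=
  Matrix.diagonal (fun i => if (i : ℕ) < r then 1 else 0)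

lemma Jmat_transpose (k r : ℕ) : (Jmat k r)ᵀ = Jmat k r := Matrix.diagonal_transpose _

lemma Jmat_idem (k r : ℕ) : Jmat k r * Jmat k r = Jmat k r := by
  rw [Jmat, Matrix.diagonal_mul_diagonal]
  ext i j
  by_cases hij : i = j
  · subst hij; by_cases h : (i : ℕ) < r <;> simp [Matrix.diagonal_apply, h]
  · simp [Matrix.diagonal_apply, hij]


/-- eigenvalue vector used in `sv`. -/
noncomputable def evs (M : Matrix (Fin m) (Fin n) ℝ) : Fin (Fintype.card (Fin n)) → ℝ :=
  (Matrix.isHermitian_conjTranspose_mul_self M).eigenvalues ∘ (Fintype.equivFin (Fin n)).symm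

lemma sv_eq (M : Matrix (Fin m) (Fin n) ℝ) {i : ℕ} (hi : i < Fintype.card (Fin n)) :
    sv M i = Real.sqrt ((evs M ∘ Tuple.sort (evs M)) (Fin.rev ⟨i, hi⟩)) := by
  rw [sv, dif_pos hi]; rfl

lemma sv_eq_zero (M : Matrix (Fin m) (Fin n) ℝ) {i : ℕ}
    (hi : ¬ i < Fintype.card (Fin n)) : sv M i = 0 := by
  rw [sv, dif_neg hi]

lemma sv_nonneg (M : Matrix (Fin m) (Fin n) ℝ) (i : ℕ) : 0 ≤ sv M i := by
  by_cases hi : i < Fintype.card (Fin n)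
  · rw [sv_eq M hi]; exact Real.sqrt_nonneg _
  · rw [sv_eq_zero M hi]

lemma sv_anti (M : Matrix (Fin m) (Fin n) ℝ) {i j : ℕ} (hij : i ≤ j) : sv M j ≤ sv M i := by
  by_cases hj : j < Fintype.card (Fin n)
  · have hi : i < Fintype.card (Fin n) := lt_of_le_of_lt hij hj
    rw [sv_eq M hi, sv_eq M hj]
    apply Real.sqrt_le_sqrt
    apply Tuple.monotone_sort (evs M)
    rw [Fin.rev_le_rev]
    exact hij
  · rw [sv_eq_zero M hj]; exact sv_nonneg M i

lemma Jmat_mul_svdDiagTrunc (r : ℕ) (M : Matrix (Fin m) (Fin n) ℝ) :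
    Jmat m r * svdDiagTrunc r M = svdDiagTrunc r M := by
  ext i j
  rw [Jmat, Matrix.diagonal_mul]
  by_cases h : (i : ℕ) < r
  · simp [h]
  · simp [svdDiagTrunc, h]

lemma svdDiagTrunc_mul_Jmat (r : ℕ) (M : Matrix (Fin m) (Fin n) ℝ) :
    svdDiagTrunc r M * Jmat n r = svdDiagTrunc r M := by
  ext i j
  rw [Jmat, Matrix.mul_diagonal]
  by_cases h : (j : ℕ) < r
  · simp [h]
  · have hz : svdDiagTrunc r M i j = 0 := by
      simp only [svdDiagTrunc, Matrix.of_apply]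
      split_ifs with hc
      · exact absurd (hc.1 ▸ hc.2) h
      · rfl
    simp [hz, h]

/-- Sum of squares of a pseudo-diagonal matrix. -/
lemma sum_sq_pdiag (f : ℕ → ℝ) (P : ℕ → Prop) [DecidablePred P] :
    ∑ i : Fin m, ∑ j : Fin n, (if (i : ℕ) = (j : ℕ) ∧ P (i : ℕ) then f (i : ℕ) else 0) ^ 2
      = ∑ k ∈ (Finset.range (min m n)).filter P, f k ^ 2 := by
  have hinner : ∀ i : Fin m,
      (∑ j : Fin n, (if (i : ℕ) = (j : ℕ) ∧ P (i : ℕ) then f (i : ℕ) else 0) ^ 2)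
        = if (i : ℕ) < n ∧ P (i : ℕ) then f (i : ℕ) ^ 2 else 0 := by
    intro i
    by_cases hP : P (i : ℕ)
    · by_cases hn : (i : ℕ) < n
      · rw [Finset.sum_eq_single (⟨(i : ℕ), hn⟩ : Fin n)]
        · simp [hP, hn]
        · intro b _ hb
          have hbne : (i : ℕ) ≠ (b : ℕ) := by
            intro hc
            exact hb (Fin.ext hc.symm)
          simp [hbne]
        · intro hc; exact absurd (Finset.mem_univ _) hc
      · rw [Finset.sum_eq_zero, if_neg (by tauto)]
        intro j _
        have : (i : ℕ) ≠ (j : ℕ) := by have := j.isLt; omega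
        simp [this]
    · rw [Finset.sum_eq_zero, if_neg (by tauto)]
      intro j _; simp [hP]
  rw [Finset.sum_congr rfl (fun i _ => hinner i)]
  rw [Fin.sum_univ_eq_sum_range (fun k => if k < n ∧ P k then f k ^ 2 else 0) m]
  rw [← Finset.sum_filter]
  apply Finset.sum_congr _ (fun _ _ => rfl)
  ext k
  simp only [Finset.mem_filter, Finset.mem_range, lt_min_iff]
  tauto

lemma entry_trunc_sub_diag (r : ℕ) (M : Matrix (Fin m) (Fin n) ℝ) (i : Fin m) (j : Fin n) :
    (svdDiagTrunc r M - svdDiag M) i j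
      = if (i : ℕ) = (j : ℕ) ∧ r ≤ (i : ℕ) then -sv M (i : ℕ) else 0 := by
  rw [Matrix.sub_apply]
  simp only [svdDiag, svdDiagTrunc, Matrix.of_apply]
  by_cases hij : (i : ℕ) = (j : ℕ)
  · by_cases h : (i : ℕ) < r
    · rw [if_pos ⟨hij, h⟩, if_pos hij, if_neg (fun hc => absurd hc.2 (not_le.mpr h)), sub_self]
    · rw [if_neg (fun hc => absurd hc.2 h), if_pos hij, if_pos ⟨hij, not_lt.mp h⟩, zero_sub]
  · rw [if_neg (fun hc => hij hc.1), if_neg hij, if_neg (fun hc => hij hc.1), sub_zero]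

lemma sum_sq_trunc_sub_diag (r : ℕ) (M : Matrix (Fin m) (Fin n) ℝ) :
    ∑ i, ∑ j, ((svdDiagTrunc r M - svdDiag M) i j) ^ 2
      = ∑ k ∈ Finset.Ico r (min m n), sv M k ^ 2 := by
  have h1 : ∀ i : Fin m, ∀ j : Fin n, ((svdDiagTrunc r M - svdDiag M) i j) ^ 2
      = (if (i : ℕ) = (j : ℕ) ∧ r ≤ (i : ℕ) then -sv M (i : ℕ) else 0) ^ 2 := by
    intro i j; rw [entry_trunc_sub_diag]
  calc ∑ i, ∑ j, ((svdDiagTrunc r M - svdDiag M) i j) ^ 2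
      = ∑ i : Fin m, ∑ j : Fin n,
          (if (i : ℕ) = (j : ℕ) ∧ r ≤ (i : ℕ) then -sv M (i : ℕ) else 0) ^ 2 := by
        exact Finset.sum_congr rfl fun i _ => Finset.sum_congr rfl fun j _ => h1 i j
    _ = ∑ k ∈ (Finset.range (min m n)).filter (fun k => r ≤ k), (-sv M k) ^ 2 :=
        sum_sq_pdiag (fun k => -sv M k) (fun k => r ≤ k)
    _ = ∑ k ∈ Finset.Ico r (min m n), sv M k ^ 2 := by
        have hset : (Finset.range (min m n)).filter (fun k => r ≤ k)
            = Finset.Ico r (min m n) := by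
          ext k
          simp only [Finset.mem_filter, Finset.mem_range, Finset.mem_Ico]
          tauto
        rw [hset]
        exact Finset.sum_congr rfl fun k _ => neg_sq _

lemma frob_trunc_sub_diag (r : ℕ) (M : Matrix (Fin m) (Fin n) ℝ) :
    frob (svdDiagTrunc r M - svdDiag M)
      = Real.sqrt (∑ k ∈ Finset.Ico r (min m n), sv M k ^ 2) := by
  rw [frob, sum_sq_trunc_sub_diag]

lemma sum_sq_diag (M : Matrix (Fin m) (Fin n) ℝ) :
    ∑ i, ∑ j, ((svdDiag M) i j) ^ 2 = ∑ k ∈ Finset.range (min m n), sv M k ^ 2 := by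
  have h1 : ∀ i : Fin m, ∀ j : Fin n, ((svdDiag M) i j) ^ 2
      = (if (i : ℕ) = (j : ℕ) ∧ True then sv M (i : ℕ) else 0) ^ 2 := by
    intro i j; simp [svdDiag]
  calc ∑ i, ∑ j, ((svdDiag M) i j) ^ 2
      = ∑ i : Fin m, ∑ j : Fin n,
          (if (i : ℕ) = (j : ℕ) ∧ True then sv M (i : ℕ) else 0) ^ 2 :=
        Finset.sum_congr rfl fun i _ => Finset.sum_congr rfl fun j _ => h1 i j
    _ = ∑ k ∈ (Finset.range (min m n)).filter (fun _ => True), sv M k ^ 2 :=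
        sum_sq_pdiag (sv M) (fun _ => True)
    _ = ∑ k ∈ Finset.range (min m n), sv M k ^ 2 := by rw [Finset.filter_true]


lemma rayleigh_le {k : ℕ} {A : Matrix (Fin k) (Fin k) ℝ} (hA : A.IsHermitian) {c : ℝ}
    (hc : ∀ i, hA.eigenvalues i ≤ c) (v : Fin k → ℝ) :
    v ⬝ᵥ (A *ᵥ v) ≤ c * (v ⬝ᵥ v) := by
  classical
  set U : Matrix (Fin k) (Fin k) ℝ := ↑(hA.eigenvectorUnitary) with hUdef
  have hUst : U * star U = 1 := (Matrix.mem_unitaryGroup_iff).mp hA.eigenvectorUnitary.2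
  set x : Fin k → ℝ := v ᵥ* U with hxdef
  have hx2 : star U *ᵥ v = x := by
    rw [Matrix.star_eq_conjTranspose, Matrix.conjTranspose_eq_transpose_of_trivial,
      Matrix.mulVec_transpose]
  have hspec : A = U * Matrix.diagonal hA.eigenvalues * star U := by
    have := hA.spectral_theorem
    rwa [RCLike.ofReal_real_eq_id, Function.id_comp] at this
  have hxx : ∑ i, x i ^ 2 = v ⬝ᵥ v := by
    have h1 : ∑ i, x i ^ 2 = x ⬝ᵥ x := by simp [dotProduct, sq]
    rw [h1]
    nth_rewrite 2 [← hx2]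
    rw [← Matrix.dotProduct_mulVec, Matrix.mulVec_mulVec, hUst, Matrix.one_mulVec]
  calc v ⬝ᵥ (A *ᵥ v)
      = v ⬝ᵥ ((U * Matrix.diagonal hA.eigenvalues * star U) *ᵥ v) := by rw [← hspec]
    _ = (v ᵥ* U) ⬝ᵥ (Matrix.diagonal hA.eigenvalues *ᵥ (star U *ᵥ v)) := by
        rw [← Matrix.mulVec_mulVec, ← Matrix.mulVec_mulVec, Matrix.dotProduct_mulVec]
    _ = ∑ i, hA.eigenvalues i * x i ^ 2 := by
        rw [hx2, ← hxdef]
        simp only [dotProduct, Matrix.mulVec_diagonal]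
        exact Finset.sum_congr rfl fun i _ => by ring
    _ ≤ ∑ i, c * x i ^ 2 :=
        Finset.sum_le_sum fun i _ => mul_le_mul_of_nonneg_right (hc i) (sq_nonneg _)
    _ = c * ∑ i, x i ^ 2 := by rw [Finset.mul_sum]
    _ = c * (v ⬝ᵥ v) := by rw [hxx]

lemma eig_le_sv_sq (Z : Matrix (Fin m) (Fin n) ℝ) (i : Fin n) :
    (Matrix.isHermitian_conjTranspose_mul_self Z).eigenvalues i ≤ sv Z 0 ^ 2 := by
  have h0 : (0 : ℕ) < Fintype.card (Fin n) := by
    have hi := i.isLt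
    simp only [Fintype.card_fin]
    omega
  have hnn : 0 ≤ (evs Z ∘ Tuple.sort (evs Z)) (Fin.rev ⟨0, h0⟩) := by
    simp only [evs, Function.comp_apply]
    exact Matrix.eigenvalues_conjTranspose_mul_self_nonneg Z _
  have hsq : sv Z 0 ^ 2 = (evs Z ∘ Tuple.sort (evs Z)) (Fin.rev ⟨0, h0⟩) := by
    rw [sv_eq Z h0, Real.sq_sqrt hnn]
  rw [hsq]
  have h1 : (Matrix.isHermitian_conjTranspose_mul_self Z).eigenvalues i
      = (evs Z ∘ Tuple.sort (evs Z)) ((Tuple.sort (evs Z))⁻¹ (Fintype.equivFin (Fin n) i)) := by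
    simp [evs, Function.comp_apply]
  rw [h1]
  apply Tuple.monotone_sort (evs Z)
  have hlt := ((Tuple.sort (evs Z))⁻¹ (Fintype.equivFin (Fin n) i)).isLt
  have hz : ((⟨0, h0⟩ : Fin (Fintype.card (Fin n)))).val = 0 := rfl
  rw [Fin.le_def, Fin.val_rev, hz]
  omega

lemma sum_sq_mulVec_le (Z : Matrix (Fin m) (Fin n) ℝ) (v : Fin n → ℝ) :
    ∑ i, (Z *ᵥ v) i ^ 2 ≤ sv Z 0 ^ 2 * ∑ j, v j ^ 2 := by
  have h1 : ∑ i, (Z *ᵥ v) i ^ 2 = (Z *ᵥ v) ⬝ᵥ (Z *ᵥ v) := by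
    simp [dotProduct, sq]
  have h2 : (Z *ᵥ v) ⬝ᵥ (Z *ᵥ v) = v ⬝ᵥ ((Zᴴ * Z) *ᵥ v) := by
    rw [Matrix.dotProduct_mulVec v, ← Matrix.vecMul_vecMul]
    rw [Matrix.conjTranspose_eq_transpose_of_trivial, Matrix.vecMul_transpose,
      ← Matrix.dotProduct_mulVec]
  have h3 : v ⬝ᵥ ((Zᴴ * Z) *ᵥ v) ≤ sv Z 0 ^ 2 * (v ⬝ᵥ v) :=
    rayleigh_le (Matrix.isHermitian_conjTranspose_mul_self Z) (eig_le_sv_sq Z) v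
  have h4 : v ⬝ᵥ v = ∑ j, v j ^ 2 := by simp [dotProduct, sq]
  rw [h1, h2, ← h4]
  exact h3

lemma sum_sq_vecMul_le (Z : Matrix (Fin m) (Fin n) ℝ) (u : Fin m → ℝ) :
    ∑ j, (u ᵥ* Z) j ^ 2 ≤ sv Z 0 ^ 2 * ∑ i, u i ^ 2 := by
  set w : Fin n → ℝ := u ᵥ* Z with hw
  set s : ℝ := ∑ j, w j ^ 2 with hs
  have hs0 : 0 ≤ s := Finset.sum_nonneg fun _ _ => sq_nonneg _
  have hsv0 : 0 ≤ sv Z 0 := sv_nonneg Z 0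
  have hu0 : 0 ≤ ∑ i, u i ^ 2 := Finset.sum_nonneg fun _ _ => sq_nonneg _
  have h1 : s = u ⬝ᵥ (Z *ᵥ w) := by
    rw [Matrix.dotProduct_mulVec, ← hw, hs]
    simp [dotProduct, sq]
  have h2 : u ⬝ᵥ (Z *ᵥ w) ≤ Real.sqrt (∑ i, u i ^ 2) * Real.sqrt (∑ i, (Z *ᵥ w) i ^ 2) :=
    Real.sum_mul_le_sqrt_mul_sqrt _ _ _
  have h3 : Real.sqrt (∑ i, (Z *ᵥ w) i ^ 2) ≤ Real.sqrt (sv Z 0 ^ 2 * s) :=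
    Real.sqrt_le_sqrt (sum_sq_mulVec_le Z w)
  have h4 : Real.sqrt (sv Z 0 ^ 2 * s) = sv Z 0 * Real.sqrt s := by
    rw [Real.sqrt_mul (sq_nonneg _), Real.sqrt_sq hsv0]
  have h5 : s ≤ Real.sqrt (∑ i, u i ^ 2) * (sv Z 0 * Real.sqrt s) := by
    calc s = u ⬝ᵥ (Z *ᵥ w) := h1
      _ ≤ Real.sqrt (∑ i, u i ^ 2) * Real.sqrt (∑ i, (Z *ᵥ w) i ^ 2) := h2
      _ ≤ Real.sqrt (∑ i, u i ^ 2) * (sv Z 0 * Real.sqrt s) := by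
          refine mul_le_mul_of_nonneg_left ?_ (Real.sqrt_nonneg _)
          rw [← h4]; exact h3
  have hsqrt : Real.sqrt s ≤ Real.sqrt (∑ i, u i ^ 2) * sv Z 0 := by
    rcases eq_or_lt_of_le (Real.sqrt_nonneg s) with h | h
    · rw [← h]; positivity
    · have hss : Real.sqrt s * Real.sqrt s = s := Real.mul_self_sqrt hs0
      nlinarith [h5]
  calc s = Real.sqrt s * Real.sqrt s := (Real.mul_self_sqrt hs0).symm
    _ ≤ (Real.sqrt (∑ i, u i ^ 2) * sv Z 0) * (Real.sqrt (∑ i, u i ^ 2) * sv Z 0) := by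
        have := Real.sqrt_nonneg s
        nlinarith [hsqrt]
    _ = (Real.sqrt (∑ i, u i ^ 2) * Real.sqrt (∑ i, u i ^ 2)) * (sv Z 0 * sv Z 0) := by
        ring
    _ = sv Z 0 ^ 2 * ∑ i, u i ^ 2 := by rw [Real.mul_self_sqrt hu0]; ring


lemma frob_sq_J_mul (r : ℕ) (M : Matrix (Fin m) (Fin n) ℝ) :
    frob (Jmat m r * M) ^ 2
      = ∑ i ∈ Finset.univ.filter (fun i : Fin m => (i : ℕ) < r), ∑ j, M i j ^ 2 := by
  rw [frob_sq_eq]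
  have he : ∀ i : Fin m, ∑ j, ((Jmat m r * M) i j) ^ 2
      = if (i : ℕ) < r then ∑ j, M i j ^ 2 else 0 := by
    intro i
    by_cases h : (i : ℕ) < r
    · simp [Jmat, Matrix.diagonal_mul, h]
    · simp [Jmat, Matrix.diagonal_mul, h]
  rw [Finset.sum_congr rfl fun i _ => he i, ← Finset.sum_filter]

lemma frob_sq_mul_J (r : ℕ) (M : Matrix (Fin m) (Fin n) ℝ) :
    frob (M * Jmat n r) ^ 2
      = ∑ j ∈ Finset.univ.filter (fun j : Fin n => (j : ℕ) < r), ∑ i, M i j ^ 2 := by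
  rw [frob_sq_eq, Finset.sum_comm]
  have he : ∀ j : Fin n, ∑ i, ((M * Jmat n r) i j) ^ 2
      = if (j : ℕ) < r then ∑ i, M i j ^ 2 else 0 := by
    intro j
    by_cases h : (j : ℕ) < r
    · simp [Jmat, Matrix.mul_diagonal, h]
    · simp [Jmat, Matrix.mul_diagonal, h]
  rw [Finset.sum_congr rfl fun j _ => he j, ← Finset.sum_filter]

lemma card_filter_lt_le (k r : ℕ) :
    (Finset.univ.filter (fun i : Fin k => (i : ℕ) < r)).card ≤ r := by
  classical
  have hmaps : ∀ i ∈ Finset.univ.filter (fun i : Fin k => (i : ℕ) < r),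
      (i : ℕ) ∈ Finset.range r := by
    intro i hi
    simp only [Finset.mem_filter] at hi
    simpa using hi.2
  have := Finset.card_le_card_of_injOn (fun i : Fin k => (i : ℕ)) hmaps
    (fun a _ b _ h => Fin.ext h)
  simpa using this

lemma frob_PZ_sq_le (r : ℕ) {U : Matrix (Fin m) (Fin m) ℝ} (hU : Uᵀ * U = 1)
    (Z : Matrix (Fin m) (Fin n) ℝ) :
    frob (U * Jmat m r * Uᵀ * Z) ^ 2 ≤ r * sv Z 0 ^ 2 := by
  have hfr : frob (U * Jmat m r * Uᵀ * Z) = frob (Jmat m r * (Uᵀ * Z)) := by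
    rw [Matrix.mul_assoc, Matrix.mul_assoc, frob_mul_orthL hU]
  rw [hfr, frob_sq_J_mul]
  have hrow : ∀ i : Fin m, ∑ j, ((Uᵀ * Z) i j) ^ 2 ≤ sv Z 0 ^ 2 := by
    intro i
    have hv : ∀ j, (Uᵀ * Z) i j = ((fun k => U k i) ᵥ* Z) j := by
      intro j
      simp [Matrix.mul_apply, Matrix.vecMul, dotProduct, Matrix.transpose_apply]
    have hnorm : ∑ k, (U k i) ^ 2 = 1 := by
      have h1 : (Uᵀ * U) i i = (1 : Matrix (Fin m) (Fin m) ℝ) i i := by rw [hU]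
      simpa [Matrix.mul_apply, Matrix.transpose_apply, Matrix.one_apply, sq] using h1
    calc ∑ j, ((Uᵀ * Z) i j) ^ 2 = ∑ j, (((fun k => U k i) ᵥ* Z) j) ^ 2 :=
          Finset.sum_congr rfl fun j _ => by rw [hv j]
      _ ≤ sv Z 0 ^ 2 * ∑ k, (U k i) ^ 2 := sum_sq_vecMul_le Z _
      _ = sv Z 0 ^ 2 := by rw [hnorm, mul_one]
  calc ∑ i ∈ Finset.univ.filter (fun i : Fin m => (i : ℕ) < r), ∑ j, ((Uᵀ * Z) i j) ^ 2
      ≤ ∑ _i ∈ Finset.univ.filter (fun i : Fin m => (i : ℕ) < r), sv Z 0 ^ 2 :=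
        Finset.sum_le_sum fun i _ => hrow i
    _ = ((Finset.univ.filter (fun i : Fin m => (i : ℕ) < r)).card : ℝ) * sv Z 0 ^ 2 := by
        rw [Finset.sum_const, nsmul_eq_mul]
    _ ≤ r * sv Z 0 ^ 2 := by
        have := card_filter_lt_le m r
        exact mul_le_mul_of_nonneg_right (by exact_mod_cast this) (sq_nonneg _)

lemma frob_ZQ_sq_le (r : ℕ) {V : Matrix (Fin n) (Fin n) ℝ} (hV : Vᵀ * V = 1)
    (Z : Matrix (Fin m) (Fin n) ℝ) :
    frob (Z * (V * Jmat n r * Vᵀ)) ^ 2 ≤ r * sv Z 0 ^ 2 := by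
  have hfr : frob (Z * (V * Jmat n r * Vᵀ)) = frob ((Z * V) * Jmat n r) := by
    have : Z * (V * Jmat n r * Vᵀ) = ((Z * V) * Jmat n r) * Vᵀ := by
      simp only [Matrix.mul_assoc]
    rw [this, frob_mul_orthR hV]
  rw [hfr, frob_sq_mul_J]
  have hcol : ∀ j : Fin n, ∑ i, ((Z * V) i j) ^ 2 ≤ sv Z 0 ^ 2 := by
    intro j
    have hv : ∀ i, (Z * V) i j = (Z *ᵥ (fun k => V k j)) i := by
      intro i
      simp [Matrix.mul_apply, Matrix.mulVec, dotProduct]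
    have hnorm : ∑ k, (V k j) ^ 2 = 1 := by
      have h1 : (Vᵀ * V) j j = (1 : Matrix (Fin n) (Fin n) ℝ) j j := by rw [hV]
      simpa [Matrix.mul_apply, Matrix.transpose_apply, Matrix.one_apply, sq] using h1
    calc ∑ i, ((Z * V) i j) ^ 2 = ∑ i, ((Z *ᵥ (fun k => V k j)) i) ^ 2 :=
          Finset.sum_congr rfl fun i _ => by rw [hv i]
      _ ≤ sv Z 0 ^ 2 * ∑ k, (V k j) ^ 2 := sum_sq_mulVec_le Z _
      _ = sv Z 0 ^ 2 := by rw [hnorm, mul_one]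
  calc ∑ j ∈ Finset.univ.filter (fun j : Fin n => (j : ℕ) < r), ∑ i, ((Z * V) i j) ^ 2
      ≤ ∑ _j ∈ Finset.univ.filter (fun j : Fin n => (j : ℕ) < r), sv Z 0 ^ 2 :=
        Finset.sum_le_sum fun j _ => hcol j
    _ = ((Finset.univ.filter (fun j : Fin n => (j : ℕ) < r)).card : ℝ) * sv Z 0 ^ 2 := by
        rw [Finset.sum_const, nsmul_eq_mul]
    _ ≤ r * sv Z 0 ^ 2 := by
        have := card_filter_lt_le n r
        exact mul_le_mul_of_nonneg_right (by exact_mod_cast this) (sq_nonneg _)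


lemma counting (g : ℕ → ℝ) (hg0 : ∀ i, 0 ≤ g i) (hganti : ∀ i j, i ≤ j → g j ≤ g i)
    (N r : ℕ) (c : ℕ → ℝ) (hc0 : ∀ j, 0 ≤ c j) (hc1 : ∀ j, c j ≤ 1)
    (hcs : ∑ j ∈ Finset.range N, c j ≤ r) :
    ∑ j ∈ Finset.range N, c j * g j ≤ ∑ k ∈ Finset.range r, g k := by
  rcases le_or_gt N r with hNr | hrN
  · calc ∑ j ∈ Finset.range N, c j * g j ≤ ∑ j ∈ Finset.range N, g j :=
        Finset.sum_le_sum fun j _ => by nlinarith [hc0 j, hc1 j, hg0 j]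
      _ ≤ ∑ k ∈ Finset.range r, g k :=
        Finset.sum_le_sum_of_subset_of_nonneg (Finset.range_subset_range.mpr hNr)
          (fun k _ _ => hg0 k)
  · have hrN' : r ≤ N := le_of_lt hrN
    have hsplit : ∑ j ∈ Finset.range r, c j * g j + ∑ j ∈ Finset.Ico r N, c j * g j
        = ∑ j ∈ Finset.range N, c j * g j := Finset.sum_range_add_sum_Ico _ hrN'
    have hcsplit : ∑ j ∈ Finset.range r, c j + ∑ j ∈ Finset.Ico r N, c j
        = ∑ j ∈ Finset.range N, c j := Finset.sum_range_add_sum_Ico _ hrN'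
    have h2 : ∑ j ∈ Finset.Ico r N, c j * g j ≤ (∑ j ∈ Finset.Ico r N, c j) * g r := by
      rw [Finset.sum_mul]
      refine Finset.sum_le_sum fun j hj => ?_
      have hrj : r ≤ j := (Finset.mem_Ico.mp hj).1
      exact mul_le_mul_of_nonneg_left (hganti r j hrj) (hc0 j)
    have h3 : (∑ j ∈ Finset.Ico r N, c j) * g r
        ≤ ((r : ℝ) - ∑ j ∈ Finset.range r, c j) * g r := by
      apply mul_le_mul_of_nonneg_right _ (hg0 r)
      linarith
    have h4 : ((r : ℝ) - ∑ j ∈ Finset.range r, c j) * g r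
        = ∑ j ∈ Finset.range r, (1 - c j) * g r := by
      rw [← Finset.sum_mul]
      congr 1
      rw [Finset.sum_sub_distrib, Finset.sum_const, Finset.card_range]
      simp
    have h5 : ∑ j ∈ Finset.range r, (1 - c j) * g r
        ≤ ∑ j ∈ Finset.range r, (1 - c j) * g j := by
      refine Finset.sum_le_sum fun j hj => ?_
      have hjr : j ≤ r := le_of_lt (Finset.mem_range.mp hj)
      exact mul_le_mul_of_nonneg_left (hganti j r hjr) (by linarith [hc1 j])
    have h6 : ∑ j ∈ Finset.range r, c j * g j + ∑ j ∈ Finset.range r, (1 - c j) * g j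
        = ∑ j ∈ Finset.range r, g j := by
      rw [← Finset.sum_add_distrib]
      exact Finset.sum_congr rfl fun j _ => by ring
    linarith

/-- truncated squared singular values -/
noncomputable def gf (Y : Matrix (Fin m) (Fin n) ℝ) (k : ℕ) : ℝ :=
  if k < min m n then sv Y k ^ 2 else 0

lemma gf_nonneg (Y : Matrix (Fin m) (Fin n) ℝ) (k : ℕ) : 0 ≤ gf Y k := by
  rw [gf]; split
  · exact sq_nonneg _
  · exact le_rfl

lemma gf_anti (Y : Matrix (Fin m) (Fin n) ℝ) : ∀ i j, i ≤ j → gf Y j ≤ gf Y i := by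
  intro i j hij
  rw [gf, gf]
  by_cases hj : j < min m n
  · have hi : i < min m n := lt_of_le_of_lt hij hj
    rw [if_pos hi, if_pos hj]
    exact pow_le_pow_left₀ (sv_nonneg Y j) (sv_anti Y hij) 2
  · rw [if_neg hj]
    split_ifs with hi
    · exact sq_nonneg _
    · exact le_rfl

lemma gf_eq_sv_sq (Y : Matrix (Fin m) (Fin n) ℝ) {k : ℕ} (hk : k < min m n) :
    gf Y k = sv Y k ^ 2 := if_pos hk

noncomputable def wcoef {m : ℕ} (W : Matrix (Fin m) (Fin m) ℝ) (i : Fin m) (jj : ℕ) : ℝ :=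
  ∑ k : Fin m, if (k : ℕ) = jj then W i k else 0

noncomputable def ccoef {m : ℕ} (r : ℕ) (W : Matrix (Fin m) (Fin m) ℝ) (jj : ℕ) : ℝ :=
  ∑ i ∈ Finset.univ.filter (fun i : Fin m => (i : ℕ) < r), (wcoef W i jj) ^ 2

lemma wcoef_lt {W : Matrix (Fin m) (Fin m) ℝ} {i : Fin m} {jj : ℕ} (h : jj < m) :
    wcoef W i jj = W i ⟨jj, h⟩ := by
  rw [wcoef]
  rw [Finset.sum_eq_single (⟨jj, h⟩ : Fin m)]
  · simp
  · intro b _ hb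
    have hne : (b : ℕ) ≠ jj := fun hc => hb (Fin.ext hc)
    simp [hne]
  · intro hc; exact absurd (Finset.mem_univ _) hc

lemma wcoef_ge {W : Matrix (Fin m) (Fin m) ℝ} {i : Fin m} {jj : ℕ} (h : ¬ jj < m) :
    wcoef W i jj = 0 := by
  rw [wcoef]
  apply Finset.sum_eq_zero
  intro k _
  have hne : (k : ℕ) ≠ jj := by have := k.isLt; omega
  simp [hne]

/-- Norm bound for a rank-r projected matrix against top singular values. -/
lemma frob_PY_sq_le (r : ℕ) {U1 U2 : Matrix (Fin m) (Fin m) ℝ}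
    (hU1 : U1ᵀ * U1 = 1) (hU2 : U2ᵀ * U2 = 1)
    {V2 : Matrix (Fin n) (Fin n) ℝ} (hV2 : V2ᵀ * V2 = 1)
    (Y : Matrix (Fin m) (Fin n) ℝ) (hY : Y = U2 * svdDiag Y * V2ᵀ) :
    frob (U1 * Jmat m r * U1ᵀ * Y) ^ 2 ≤ ∑ k ∈ Finset.range r, gf Y k := by
  classical
  have hU1' : U1 * U1ᵀ = 1 := mul_eq_one_comm.mp hU1
  have hU2' : U2 * U2ᵀ = 1 := mul_eq_one_comm.mp hU2
  set W : Matrix (Fin m) (Fin m) ℝ := U1ᵀ * U2 with hWdef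
  have hWtW : Wᵀ * W = 1 := by
    rw [hWdef, Matrix.transpose_mul, Matrix.transpose_transpose]
    calc U2ᵀ * U1 * (U1ᵀ * U2) = U2ᵀ * (U1 * U1ᵀ) * U2 := by simp only [Matrix.mul_assoc]
      _ = 1 := by rw [hU1', Matrix.mul_one, hU2]
  have hWWt : W * Wᵀ = 1 := mul_eq_one_comm.mp hWtW
  have hform : U1 * Jmat m r * U1ᵀ * Y = U1 * ((Jmat m r * (W * svdDiag Y)) * V2ᵀ) := by
    nth_rewrite 1 [hY]
    rw [hWdef]
    simp only [Matrix.mul_assoc]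
  have hfr : frob (U1 * Jmat m r * U1ᵀ * Y) = frob (Jmat m r * (W * svdDiag Y)) := by
    rw [hform, frob_mul_orthL hU1, frob_mul_orthR hV2]
  rw [hfr, frob_sq_J_mul]
  have hentry : ∀ (i : Fin m) (j : Fin n),
      (W * svdDiag Y) i j = wcoef W i (j : ℕ) * sv Y (j : ℕ) := by
    intro i j
    rw [Matrix.mul_apply, wcoef, Finset.sum_mul]
    refine Finset.sum_congr rfl fun k _ => ?_
    by_cases h : (k : ℕ) = (j : ℕ)
    · simp [svdDiag, h]
    · simp [svdDiag, h]
  have hc0 : ∀ jj, 0 ≤ ccoef r W jj := fun jj => Finset.sum_nonneg fun _ _ => sq_nonneg _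
  have hc1 : ∀ jj, ccoef r W jj ≤ 1 := by
    intro jj
    by_cases h : jj < m
    · have hsub : ccoef r W jj ≤ ∑ i : Fin m, (wcoef W i jj) ^ 2 :=
        Finset.sum_le_sum_of_subset_of_nonneg (Finset.filter_subset _ _)
          (fun _ _ _ => sq_nonneg _)
      have hcol : ∑ i : Fin m, (wcoef W i jj) ^ 2 = 1 := by
        have h1 : (Wᵀ * W) ⟨jj, h⟩ ⟨jj, h⟩ = (1 : Matrix (Fin m) (Fin m) ℝ) ⟨jj, h⟩ ⟨jj, h⟩ := by
          rw [hWtW]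
        rw [Matrix.mul_apply] at h1
        simp only [Matrix.transpose_apply, Matrix.one_apply_eq] at h1
        calc ∑ i : Fin m, (wcoef W i jj) ^ 2
            = ∑ i : Fin m, W i ⟨jj, h⟩ * W i ⟨jj, h⟩ := by
              refine Finset.sum_congr rfl fun i _ => ?_
              rw [wcoef_lt h, sq]
          _ = 1 := h1
      exact le_trans hsub (le_of_eq hcol)
    · have hz : ccoef r W jj = 0 := by
        rw [ccoef]
        apply Finset.sum_eq_zero
        intro i _
        rw [wcoef_ge h]
        norm_num
      rw [hz]
      norm_num
  have hrow : ∀ i : Fin m, ∑ jj ∈ Finset.range n, (wcoef W i jj) ^ 2 ≤ 1 := by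
    intro i
    have hwrow : ∑ k : Fin m, (W i k) ^ 2 = 1 := by
      have h1 : (W * Wᵀ) i i = (1 : Matrix (Fin m) (Fin m) ℝ) i i := by rw [hWWt]
      rw [Matrix.mul_apply] at h1
      simp only [Matrix.transpose_apply, Matrix.one_apply_eq] at h1
      calc ∑ k : Fin m, (W i k) ^ 2 = ∑ k : Fin m, W i k * W i k := by
            refine Finset.sum_congr rfl fun k _ => by rw [sq]
        _ = 1 := h1
    have hbig : ∑ jj ∈ Finset.range n, (wcoef W i jj) ^ 2
        ≤ ∑ jj ∈ Finset.range (max m n), (wcoef W i jj) ^ 2 :=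
      Finset.sum_le_sum_of_subset_of_nonneg
        (Finset.range_subset_range.mpr (le_max_right m n)) (fun _ _ _ => sq_nonneg _)
    have hsplit : ∑ jj ∈ Finset.range m, (wcoef W i jj) ^ 2
          + ∑ jj ∈ Finset.Ico m (max m n), (wcoef W i jj) ^ 2
        = ∑ jj ∈ Finset.range (max m n), (wcoef W i jj) ^ 2 :=
      Finset.sum_range_add_sum_Ico _ (le_max_left m n)
    have hzero : ∑ jj ∈ Finset.Ico m (max m n), (wcoef W i jj) ^ 2 = 0 := by
      apply Finset.sum_eq_zero
      intro jj hjj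
      have hge : ¬ jj < m := not_lt.mpr (Finset.mem_Ico.mp hjj).1
      rw [wcoef_ge hge]
      norm_num
    have hfirst : ∑ jj ∈ Finset.range m, (wcoef W i jj) ^ 2 = 1 := by
      rw [← Fin.sum_univ_eq_sum_range (fun jj => (wcoef W i jj) ^ 2) m]
      calc ∑ k : Fin m, (wcoef W i (k : ℕ)) ^ 2 = ∑ k : Fin m, (W i k) ^ 2 := by
            refine Finset.sum_congr rfl fun k _ => ?_
            rw [wcoef_lt k.isLt]
          _ = 1 := hwrow
    linarith
  have hcs : ∑ jj ∈ Finset.range n, ccoef r W jj ≤ (r : ℝ) := by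
    have hcc : ∀ jj, ccoef r W jj
        = ∑ i ∈ Finset.univ.filter (fun i : Fin m => (i : ℕ) < r), (wcoef W i jj) ^ 2 :=
      fun jj => rfl
    rw [Finset.sum_congr rfl fun jj _ => hcc jj, Finset.sum_comm]
    calc ∑ i ∈ Finset.univ.filter (fun i : Fin m => (i : ℕ) < r),
          ∑ jj ∈ Finset.range n, (wcoef W i jj) ^ 2
        ≤ ∑ _i ∈ Finset.univ.filter (fun i : Fin m => (i : ℕ) < r), (1 : ℝ) :=
          Finset.sum_le_sum fun i _ => hrow i
      _ = ((Finset.univ.filter (fun i : Fin m => (i : ℕ) < r)).card : ℝ) := by simp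
      _ ≤ (r : ℝ) := by exact_mod_cast card_filter_lt_le m r
  have hlhs : ∑ i ∈ Finset.univ.filter (fun i : Fin m => (i : ℕ) < r),
        ∑ j, ((W * svdDiag Y) i j) ^ 2
      = ∑ jj ∈ Finset.range n, ccoef r W jj * gf Y jj := by
    rw [Finset.sum_comm]
    have hcol2 : ∀ j : Fin n,
        ∑ i ∈ Finset.univ.filter (fun i : Fin m => (i : ℕ) < r), ((W * svdDiag Y) i j) ^ 2
          = ccoef r W (j : ℕ) * gf Y (j : ℕ) := by
      intro j
      have h1 : ∀ i : Fin m,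
          ((W * svdDiag Y) i j) ^ 2 = (wcoef W i (j : ℕ)) ^ 2 * sv Y (j : ℕ) ^ 2 := by
        intro i; rw [hentry]; ring
      rw [Finset.sum_congr rfl fun i _ => h1 i, ← Finset.sum_mul, ← ccoef]
      by_cases h : (j : ℕ) < m
      · have hmin : (j : ℕ) < min m n := lt_min h j.isLt
        rw [gf_eq_sv_sq Y hmin]
      · have hcz : ccoef r W (j : ℕ) = 0 := by
          rw [ccoef]
          apply Finset.sum_eq_zero
          intro i _
          rw [wcoef_ge h]
          norm_num
        rw [hcz]
        ring
    rw [Finset.sum_congr rfl fun j _ => hcol2 j]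
    exact Fin.sum_univ_eq_sum_range (fun jj => ccoef r W jj * gf Y jj) n
  rw [hlhs]
  exact counting (gf Y) (gf_nonneg Y) (gf_anti Y) n r (ccoef r W) hc0 hc1 hcs


lemma final_algebra (t ξ sν : ℝ) (ht0 : 0 ≤ t) (hξ0 : 0 ≤ ξ) (hs0 : 0 ≤ sν)
    (hq : t ^ 2 ≤ ξ ^ 2 + 2 * ((t + ξ) * (Real.sqrt 2 * sν))) :
    t ≤ (2 + Real.sqrt 2) * (sν + ξ) := by
  have h20 : 0 ≤ Real.sqrt 2 := Real.sqrt_nonneg 2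
  have h2le : Real.sqrt 2 ≤ 2 := by
    nlinarith [Real.sq_sqrt (by norm_num : (0:ℝ) ≤ 2), Real.sqrt_nonneg 2]
  have hb0 : 0 ≤ Real.sqrt 2 * sν := mul_nonneg h20 hs0
  have hfactor : (t - (ξ + 2 * (Real.sqrt 2 * sν))) * (t + ξ) ≤ 0 := by nlinarith [hq]
  have ht' : t ≤ ξ + 2 * (Real.sqrt 2 * sν) := by
    rcases le_or_gt t (ξ + 2 * (Real.sqrt 2 * sν)) with h | h
    · exact h
    · exfalso
      have h1 : 0 < t - (ξ + 2 * (Real.sqrt 2 * sν)) := by linarith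
      rcases eq_or_lt_of_le (by positivity : (0:ℝ) ≤ t + ξ) with h2 | h2
      · linarith
      · nlinarith [mul_pos h1 h2]
  have h9 : Real.sqrt 2 * sν ≤ 2 * sν := mul_le_mul_of_nonneg_right h2le hs0
  have h10 : 0 ≤ Real.sqrt 2 * ξ := mul_nonneg h20 hξ0
  linarith [ht', h9, h10]

lemma two_cs (a b x y : ℝ) : a * x + b * y ≤ Real.sqrt (a^2 + b^2) * Real.sqrt (x^2 + y^2) := by
  have key : (a*x + b*y)^2 ≤ (a^2 + b^2) * (x^2 + y^2) := by nlinarith [sq_nonneg (a*y - b*x)]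
  have h2 : Real.sqrt (a^2+b^2) * Real.sqrt (x^2+y^2) = Real.sqrt ((a^2+b^2)*(x^2+y^2)) :=
    (Real.sqrt_mul (by positivity) _).symm
  rw [h2]
  calc a*x + b*y ≤ |a*x + b*y| := le_abs_self _
    _ = Real.sqrt ((a*x+b*y)^2) := (Real.sqrt_sq_eq_abs _).symm
    _ ≤ Real.sqrt ((a^2+b^2)*(x^2+y^2)) := Real.sqrt_le_sqrt key

end TSVD

open TSVD in
/-- if `Y = X* + Z` and `Y₍ᵣ₎`, `X*₍ᵣ₎` are rank-`r` truncated SVDs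
(expressed through arbitrary full SVD factorizations of `Y` and `X*`), then
`‖Y₍ᵣ₎ - X*‖_F ≤ (2+√2)(√r ‖Z‖ + ξ₍ᵣ₎)` where
`ξ₍ᵣ₎ = ‖X*₍ᵣ₎ - X*‖_F = √(∑_{i>r} σᵢ(X*)²)`. -/
theorem truncated_svd_bias_variance {m n : ℕ} (r : ℕ)
    (Xstar Z : Matrix (Fin m) (Fin n) ℝ)
    (UY : Matrix (Fin m) (Fin m) ℝ) (VY : Matrix (Fin n) (Fin n) ℝ)
    (UX : Matrix (Fin m) (Fin m) ℝ) (VX : Matrix (Fin n) (Fin n) ℝ)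
    (hUY : UYᵀ * UY = 1) (hVY : VYᵀ * VY = 1)
    (hUX : UXᵀ * UX = 1) (hVX : VXᵀ * VX = 1)
    (hY : Xstar + Z = UY * svdDiag (Xstar + Z) * VYᵀ)
    (hX : Xstar = UX * svdDiag Xstar * VXᵀ) :
    frob (UX * svdDiagTrunc r Xstar * VXᵀ - Xstar)
        = Real.sqrt (∑ i ∈ Finset.Ico r (min m n), sv Xstar i ^ 2) ∧
    frob (UY * svdDiagTrunc r (Xstar + Z) * VYᵀ - Xstar) ≤
      (2 + Real.sqrt 2) *
        (Real.sqrt r * sv Z 0 + frob (UX * svdDiagTrunc r Xstar * VXᵀ - Xstar)) := by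
  have hXr_sub : UX * svdDiagTrunc r Xstar * VXᵀ - Xstar
      = UX * ((svdDiagTrunc r Xstar - svdDiag Xstar) * VXᵀ) := by
    nth_rewrite 2 [hX]
    rw [Matrix.sub_mul, Matrix.mul_sub]
    simp only [Matrix.mul_assoc]
  have part1 : frob (UX * svdDiagTrunc r Xstar * VXᵀ - Xstar)
      = Real.sqrt (∑ i ∈ Finset.Ico r (min m n), sv Xstar i ^ 2) := by
    rw [hXr_sub, frob_mul_orthL hUX, frob_mul_orthR hVX, frob_trunc_sub_diag]
  refine ⟨part1, ?_⟩
  -- notation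
  set Y : Matrix (Fin m) (Fin n) ℝ := Xstar + Z with hYdef
  set Yr : Matrix (Fin m) (Fin n) ℝ := UY * svdDiagTrunc r Y * VYᵀ with hYr
  set Xr : Matrix (Fin m) (Fin n) ℝ := UX * svdDiagTrunc r Xstar * VXᵀ with hXrdef
  set ν : ℝ := sv Z 0 with hν
  set t : ℝ := frob (Yr - Xstar) with htdef
  set ξ : ℝ := frob (Xr - Xstar) with hξdef
  have hν0 : 0 ≤ ν := sv_nonneg Z 0
  have ht0 : 0 ≤ t := frob_nonneg _
  have hξ0 : 0 ≤ ξ := frob_nonneg _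
  -- projector helpers
  have projT : ∀ (U : Matrix (Fin m) (Fin m) ℝ), (U * Jmat m r * Uᵀ)ᵀ = U * Jmat m r * Uᵀ := by
    intro U
    rw [Matrix.transpose_mul, Matrix.transpose_mul, Matrix.transpose_transpose, Jmat_transpose]
    simp only [Matrix.mul_assoc]
  have projTn : ∀ (V : Matrix (Fin n) (Fin n) ℝ), (V * Jmat n r * Vᵀ)ᵀ = V * Jmat n r * Vᵀ := by
    intro V
    rw [Matrix.transpose_mul, Matrix.transpose_mul, Matrix.transpose_transpose, Jmat_transpose]
    simp only [Matrix.mul_assoc]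
  have projIdem : ∀ (U : Matrix (Fin m) (Fin m) ℝ), Uᵀ * U = 1 →
      (U * Jmat m r * Uᵀ) * (U * Jmat m r * Uᵀ) = U * Jmat m r * Uᵀ := by
    intro U hU
    calc (U * Jmat m r * Uᵀ) * (U * Jmat m r * Uᵀ)
        = U * (Jmat m r * ((Uᵀ * U) * (Jmat m r * Uᵀ))) := by simp only [Matrix.mul_assoc]
      _ = U * (Jmat m r * (Jmat m r * Uᵀ)) := by rw [hU, Matrix.one_mul]
      _ = U * ((Jmat m r * Jmat m r) * Uᵀ) := by rw [Matrix.mul_assoc]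
      _ = U * Jmat m r * Uᵀ := by rw [Jmat_idem]; simp only [Matrix.mul_assoc]
  set P : Matrix (Fin m) (Fin m) ℝ := UX * Jmat m r * UXᵀ with hPdef
  set PP : Matrix (Fin m) (Fin m) ℝ := UY * Jmat m r * UYᵀ with hPPdef
  set Q : Matrix (Fin n) (Fin n) ℝ := VX * Jmat n r * VXᵀ with hQdef
  have hPt : Pᵀ = P := projT UX
  have hPP2 : P * P = P := projIdem UX hUX
  have hPPt : PPᵀ = PP := projT UY
  have hPPP : PP * PP = PP := projIdem UY hUY
  have hQt : Qᵀ = Q := projTn VX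
  have hPXr : P * Xr = Xr := by
    rw [hPdef, hXrdef]
    calc (UX * Jmat m r * UXᵀ) * (UX * svdDiagTrunc r Xstar * VXᵀ)
        = UX * (Jmat m r * ((UXᵀ * UX) * (svdDiagTrunc r Xstar * VXᵀ))) := by
          simp only [Matrix.mul_assoc]
      _ = UX * (Jmat m r * (svdDiagTrunc r Xstar * VXᵀ)) := by rw [hUX, Matrix.one_mul]
      _ = UX * ((Jmat m r * svdDiagTrunc r Xstar) * VXᵀ) := by rw [Matrix.mul_assoc]
      _ = UX * svdDiagTrunc r Xstar * VXᵀ := by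
          rw [Jmat_mul_svdDiagTrunc]; simp only [Matrix.mul_assoc]
  have hPYr : PP * Yr = Yr := by
    rw [hPPdef, hYr]
    calc (UY * Jmat m r * UYᵀ) * (UY * svdDiagTrunc r Y * VYᵀ)
        = UY * (Jmat m r * ((UYᵀ * UY) * (svdDiagTrunc r Y * VYᵀ))) := by
          simp only [Matrix.mul_assoc]
      _ = UY * (Jmat m r * (svdDiagTrunc r Y * VYᵀ)) := by rw [hUY, Matrix.one_mul]
      _ = UY * ((Jmat m r * svdDiagTrunc r Y) * VYᵀ) := by rw [Matrix.mul_assoc]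
      _ = UY * svdDiagTrunc r Y * VYᵀ := by
          rw [Jmat_mul_svdDiagTrunc]; simp only [Matrix.mul_assoc]
  have hXrQ : Xr * Q = Xr := by
    rw [hQdef, hXrdef]
    calc (UX * svdDiagTrunc r Xstar * VXᵀ) * (VX * Jmat n r * VXᵀ)
        = UX * (svdDiagTrunc r Xstar * ((VXᵀ * VX) * (Jmat n r * VXᵀ))) := by
          simp only [Matrix.mul_assoc]
      _ = UX * (svdDiagTrunc r Xstar * (Jmat n r * VXᵀ)) := by rw [hVX, Matrix.one_mul]
      _ = UX * ((svdDiagTrunc r Xstar * Jmat n r) * VXᵀ) := by simp only [Matrix.mul_assoc]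
      _ = UX * svdDiagTrunc r Xstar * VXᵀ := by
          rw [svdDiagTrunc_mul_Jmat]; simp only [Matrix.mul_assoc]
  -- Frobenius facts about Y
  have hYfrob : frob Y ^ 2 = ∑ k ∈ Finset.range (min m n), sv Y k ^ 2 := by
    have h1 : frob Y = frob (svdDiag Y) := by
      nth_rewrite 1 [hY]
      rw [Matrix.mul_assoc, frob_mul_orthL hUY, frob_mul_orthR hVY]
    rw [h1, frob_sq_eq, sum_sq_diag]
  have hYr_sub : Yr - Y = UY * ((svdDiagTrunc r Y - svdDiag Y) * VYᵀ) := by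
    rw [hYr]
    nth_rewrite 2 [hY]
    rw [Matrix.sub_mul, Matrix.mul_sub]
    simp only [Matrix.mul_assoc]
  have hτ : frob (Yr - Y) ^ 2 = ∑ k ∈ Finset.Ico r (min m n), sv Y k ^ 2 := by
    rw [hYr_sub, frob_mul_orthL hUY, frob_mul_orthR hVY, frob_sq_eq, sum_sq_trunc_sub_diag]
  have hProjY : frob (P * Y) ^ 2 ≤ ∑ k ∈ Finset.range r, gf Y k := by
    rw [hPdef]
    exact frob_PY_sq_le r hUX hUY hVY Y hY
  -- Eckart-Young
  have hEY : frob (Yr - Y) ^ 2 ≤ frob (Y - Xr) ^ 2 := by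
    have hpy1 : frob (Y - Xr) ^ 2
        = frob (P * (Y - Xr)) ^ 2 + frob ((Y - Xr) - P * (Y - Xr)) ^ 2 :=
      frob_pythagoras hPt hPP2 _
    have hsub2 : (Y - Xr) - P * (Y - Xr) = Y - P * Y := by
      rw [Matrix.mul_sub, hPXr]; abel
    rw [hsub2] at hpy1
    have hpy2 : frob Y ^ 2 = frob (P * Y) ^ 2 + frob (Y - P * Y) ^ 2 :=
      frob_pythagoras hPt hPP2 Y
    have hgap : ∑ k ∈ Finset.Ico r (min m n), sv Y k ^ 2
        ≤ ∑ k ∈ Finset.range (min m n), sv Y k ^ 2 - ∑ k ∈ Finset.range r, gf Y k := by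
      rcases le_or_gt r (min m n) with hr | hr
      · have h1 : ∑ k ∈ Finset.range r, sv Y k ^ 2
            + ∑ k ∈ Finset.Ico r (min m n), sv Y k ^ 2
            = ∑ k ∈ Finset.range (min m n), sv Y k ^ 2 :=
          Finset.sum_range_add_sum_Ico _ hr
        have h2 : ∑ k ∈ Finset.range r, gf Y k = ∑ k ∈ Finset.range r, sv Y k ^ 2 :=
          Finset.sum_congr rfl fun k hk =>
            gf_eq_sv_sq Y (lt_of_lt_of_le (Finset.mem_range.mp hk) hr)
        rw [h2]
        linarith
      · have hico : Finset.Ico r (min m n) = ∅ := Finset.Ico_eq_empty (by omega)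
        have h2 : ∑ k ∈ Finset.range (min m n), gf Y k + ∑ k ∈ Finset.Ico (min m n) r, gf Y k
            = ∑ k ∈ Finset.range r, gf Y k :=
          Finset.sum_range_add_sum_Ico _ (le_of_lt hr)
        have h3 : ∑ k ∈ Finset.Ico (min m n) r, gf Y k = 0 :=
          Finset.sum_eq_zero fun k hk => by
            rw [gf, if_neg (not_lt.mpr (Finset.mem_Ico.mp hk).1)]
        have h4 : ∑ k ∈ Finset.range (min m n), gf Y k
            = ∑ k ∈ Finset.range (min m n), sv Y k ^ 2 :=
          Finset.sum_congr rfl fun k hk => gf_eq_sv_sq Y (Finset.mem_range.mp hk)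
        rw [hico]
        simp only [Finset.sum_empty]
        linarith
    have hsq1 : 0 ≤ frob (P * (Y - Xr)) ^ 2 := sq_nonneg _
    linarith [hτ, hgap, hYfrob, hProjY, hpy2, hpy1]
  -- expansions
  have hYrX : Yr - Y = (Yr - Xstar) - Z := by rw [hYdef]; abel
  have hxp1 : frob (Yr - Y) ^ 2 = t ^ 2 - 2 * ip (Yr - Xstar) Z + frob Z ^ 2 := by
    rw [hYrX, frob_sub_sq, htdef]
  have hXrY : Y - Xr = -((Xr - Xstar) - Z) := by rw [hYdef]; abel
  have hxp2 : frob (Y - Xr) ^ 2 = ξ ^ 2 - 2 * ip (Xr - Xstar) Z + frob Z ^ 2 := by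
    rw [hXrY, frob_neg, frob_sub_sq, hξdef]
  have hipdiff : ip (Yr - Xr) Z = ip (Yr - Xstar) Z - ip (Xr - Xstar) Z := by
    rw [← ip_sub_left]
    congr 1
    abel
  have hkey : t ^ 2 ≤ ξ ^ 2 + 2 * ip (Yr - Xr) Z := by
    rw [hipdiff]
    linarith [hEY, hxp1, hxp2]
  -- inner product bound
  have hsplitA : ip (Yr - Xr) Z
      = ip (PP * (Yr - Xr)) (PP * Z) + ip ((Yr - Xr) - PP * (Yr - Xr)) (Z * Q) := by
    have h1 : ip (Yr - Xr) Z
        = ip (PP * (Yr - Xr)) Z + ip ((Yr - Xr) - PP * (Yr - Xr)) Z := by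
      rw [← ip_add_left]
      congr 1
      abel
    have h2 : ip (PP * (Yr - Xr)) Z = ip (PP * (Yr - Xr)) (PP * Z) := by
      have hPA : PP * (Yr - Xr) = PP * (PP * (Yr - Xr)) := by
        rw [← Matrix.mul_assoc, hPPP]
      conv_lhs => rw [hPA]
      rw [ip_mul_left, hPPt]
    have h3 : ip ((Yr - Xr) - PP * (Yr - Xr)) Z
        = ip ((Yr - Xr) - PP * (Yr - Xr)) (Z * Q) := by
      have hAP : ((Yr - Xr) - PP * (Yr - Xr)) * Q = (Yr - Xr) - PP * (Yr - Xr) := by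
        have h7 : (Yr - Xr) - PP * (Yr - Xr) = PP * Xr - Xr := by
          rw [Matrix.mul_sub, hPYr]; abel
        rw [h7, Matrix.sub_mul, Matrix.mul_assoc, hXrQ]
      conv_lhs => rw [← hAP]
      rw [ip_mul_right, hQt]
    rw [h1, h2, h3]
  have hipA : ip (Yr - Xr) Z ≤ frob (Yr - Xr) * (Real.sqrt 2 * (Real.sqrt r * ν)) := by
    have c1 := ip_le (PP * (Yr - Xr)) (PP * Z)
    have c2 := ip_le ((Yr - Xr) - PP * (Yr - Xr)) (Z * Q)
    have two := two_cs (frob (PP * (Yr - Xr))) (frob ((Yr - Xr) - PP * (Yr - Xr)))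
      (frob (PP * Z)) (frob (Z * Q))
    have hpyA : frob (PP * (Yr - Xr)) ^ 2 + frob ((Yr - Xr) - PP * (Yr - Xr)) ^ 2
        = frob (Yr - Xr) ^ 2 := (frob_pythagoras hPPt hPPP (Yr - Xr)).symm
    have hz1 : frob (PP * Z) ^ 2 ≤ (r : ℝ) * ν ^ 2 := by
      rw [hPPdef, hν]
      have := frob_PZ_sq_le r hUY Z
      simpa [Matrix.mul_assoc] using this
    have hz2 : frob (Z * Q) ^ 2 ≤ (r : ℝ) * ν ^ 2 := by
      rw [hQdef, hν]
      exact frob_ZQ_sq_le r hVX Z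
    calc ip (Yr - Xr) Z
        ≤ frob (PP * (Yr - Xr)) * frob (PP * Z)
          + frob ((Yr - Xr) - PP * (Yr - Xr)) * frob (Z * Q) := by
          rw [hsplitA]; exact add_le_add c1 c2
      _ ≤ Real.sqrt (frob (PP * (Yr - Xr)) ^ 2 + frob ((Yr - Xr) - PP * (Yr - Xr)) ^ 2)
          * Real.sqrt (frob (PP * Z) ^ 2 + frob (Z * Q) ^ 2) := two
      _ = frob (Yr - Xr) * Real.sqrt (frob (PP * Z) ^ 2 + frob (Z * Q) ^ 2) := by
          rw [hpyA, Real.sqrt_sq (frob_nonneg _)]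
      _ ≤ frob (Yr - Xr) * Real.sqrt (2 * ((r : ℝ) * ν ^ 2)) := by
          apply mul_le_mul_of_nonneg_left _ (frob_nonneg _)
          apply Real.sqrt_le_sqrt
          linarith
      _ = frob (Yr - Xr) * (Real.sqrt 2 * (Real.sqrt r * ν)) := by
          rw [Real.sqrt_mul (by norm_num : (0:ℝ) ≤ 2), Real.sqrt_mul (Nat.cast_nonneg r),
            Real.sqrt_sq hν0]
  have htri : frob (Yr - Xr) ≤ t + ξ := by
    have hAeq : Yr - Xr = (Yr - Xstar) - (Xr - Xstar) := by abel
    rw [hAeq, htdef, hξdef]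
    exact frob_triangle_sub _ _
  -- final algebra
  have hq : t ^ 2 ≤ ξ ^ 2 + 2 * ((t + ξ) * (Real.sqrt 2 * (Real.sqrt r * ν))) := by
    have h8 : ip (Yr - Xr) Z ≤ (t + ξ) * (Real.sqrt 2 * (Real.sqrt r * ν)) :=
      le_trans hipA (mul_le_mul_of_nonneg_right htri (by positivity))
    linarith [hkey]
  show t ≤ (2 + Real.sqrt 2) * (Real.sqrt r * ν + ξ)
  exact final_algebra t ξ (Real.sqrt r * ν) ht0 hξ0 (by positivity) hq
end

section
/- (Mirsky's inequality, Frobenius case) For any matrices $A, B \in \mathbb{R}^{m \times n}$ with singular values $\sigma_1(A) \ge \cdots \ge \sigma_{\min\{m,n\}}(A)$ and $\sigma_1(B) \ge \cdots \ge \sigma_{\min\{m,n\}}(B)$, it holds that $\sqrt{\sum_{i=1}^{\min\{m,n\}} \left(\sigma_i(A) - \sigma_i(B)\right)^2} \le \|A - B\|_{\mathrm{F}}$. -/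
open Matrix BigOperators Finset

lemma sv_nonneg {m n : Type*} [Fintype m] [Fintype n] [DecidableEq n]
    (M : Matrix m n ℝ) (i : ℕ) : 0 ≤ sv M i := by
  unfold sv; split
  · exact Real.sqrt_nonneg _
  · exact le_refl _

lemma sv_antitone {m n : Type*} [Fintype m] [Fintype n] [DecidableEq n]
    (M : Matrix m n ℝ) {i j : ℕ} (hij : i ≤ j) : sv M j ≤ sv M i := by
  unfold sv
  split
  case isTrue hj =>
    have hi : i < Fintype.card n := lt_of_le_of_lt hij hj
    rw [dif_pos hi]
    apply Real.sqrt_le_sqrt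
    apply Tuple.monotone_sort
    rw [Fin.rev_le_rev]
    exact hij
  case isFalse hj =>
    split
    · exact Real.sqrt_nonneg _
    · exact le_refl _

lemma sv_eq_zero_of_ge {m n : Type*} [Fintype m] [Fintype n] [DecidableEq n]
    (M : Matrix m n ℝ) {i : ℕ} (hi : Fintype.card n ≤ i) : sv M i = 0 := by
  unfold sv; rw [dif_neg (by omega)]


lemma dp_sum_left {ι κ : Type*} [Fintype κ] (s : Finset ι) (f : ι → κ → ℝ) (v : κ → ℝ) :
    (∑ i ∈ s, f i) ⬝ᵥ v = ∑ i ∈ s, f i ⬝ᵥ v := by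
  simp only [dotProduct, Finset.sum_apply, Finset.sum_mul]
  exact Finset.sum_comm

lemma dp_sum_right {ι κ : Type*} [Fintype κ] (s : Finset ι) (v : κ → ℝ) (f : ι → κ → ℝ) :
    v ⬝ᵥ (∑ i ∈ s, f i) = ∑ i ∈ s, v ⬝ᵥ f i := by
  simp only [dotProduct, Finset.sum_apply, Finset.mul_sum]
  exact Finset.sum_comm

lemma bessel {ι κ : Type*} [Fintype ι] [DecidableEq ι] [Fintype κ] (f : ι → κ → ℝ) (c : ι → ℝ)
    (hc : ∀ i, c i ≤ 1)
    (horth : ∀ i j, f i ⬝ᵥ f j = if i = j then c i else 0) (x : κ → ℝ) :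
    ∑ i, (f i ⬝ᵥ x) ^ 2 ≤ x ⬝ᵥ x := by
  set t : ι → ℝ := fun i => f i ⬝ᵥ x with ht
  have key : 0 ≤ (x - ∑ i, t i • f i) ⬝ᵥ (x - ∑ i, t i • f i) := by
    apply Finset.sum_nonneg
    intro k _
    exact mul_self_nonneg _
  have hx_s : x ⬝ᵥ (∑ i, t i • f i) = ∑ i, t i ^ 2 := by
    rw [dp_sum_right]
    refine Finset.sum_congr rfl fun i _ => ?_
    rw [dotProduct_smul, smul_eq_mul, dotProduct_comm]
    show t i * t i = _
    ring
  have hs_x : (∑ i, t i • f i) ⬝ᵥ x = ∑ i, t i ^ 2 := by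
    rw [dp_sum_left]
    refine Finset.sum_congr rfl fun i _ => ?_
    rw [smul_dotProduct, smul_eq_mul]
    show t i * t i = _
    ring
  have hss : (∑ i, t i • f i) ⬝ᵥ (∑ j, t j • f j) = ∑ i, c i * t i ^ 2 := by
    rw [dp_sum_left]
    refine Finset.sum_congr rfl fun i _ => ?_
    rw [smul_dotProduct, dp_sum_right]
    have : ∀ j, f i ⬝ᵥ (t j • f j) = t j * (if i = j then c i else 0) := fun j => by
      rw [dotProduct_smul, horth, smul_eq_mul]
    simp_rw [this, mul_ite, mul_zero, Finset.sum_ite_eq, Finset.mem_univ, if_true, smul_eq_mul]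
    ring
  have hsum : ∑ i, c i * t i ^ 2 ≤ ∑ i, t i ^ 2 := by
    apply Finset.sum_le_sum
    intro i _
    nlinarith [sq_nonneg (t i), hc i]
  rw [dotProduct_sub, sub_dotProduct, sub_dotProduct, hx_s, hs_x, hss] at key
  linarith


lemma sum4_comm {α : Type*} [AddCommMonoid α] (s t u v : Finset ℕ) (P : ℕ → ℕ → ℕ → ℕ → α) :
    ∑ i ∈ s, ∑ j ∈ t, ∑ k ∈ u, ∑ l ∈ v, P i j k l
    = ∑ k ∈ u, ∑ l ∈ v, ∑ i ∈ s, ∑ j ∈ t, P i j k l := by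
  calc ∑ i ∈ s, ∑ j ∈ t, ∑ k ∈ u, ∑ l ∈ v, P i j k l
      = ∑ i ∈ s, ∑ k ∈ u, ∑ j ∈ t, ∑ l ∈ v, P i j k l := by
        refine Finset.sum_congr rfl fun i _ => ?_
        exact Finset.sum_comm
    _ = ∑ k ∈ u, ∑ i ∈ s, ∑ j ∈ t, ∑ l ∈ v, P i j k l := Finset.sum_comm
    _ = ∑ k ∈ u, ∑ i ∈ s, ∑ l ∈ v, ∑ j ∈ t, P i j k l := by
        refine Finset.sum_congr rfl fun k _ => Finset.sum_congr rfl fun i _ => ?_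
        exact Finset.sum_comm
    _ = ∑ k ∈ u, ∑ l ∈ v, ∑ i ∈ s, ∑ j ∈ t, P i j k l := by
        refine Finset.sum_congr rfl fun k _ => ?_
        exact Finset.sum_comm

lemma layer_cake (N : ℕ) (d e : ℕ → ℝ) (S : ℕ → ℕ → ℝ)
    (hd : ∀ {i j : ℕ}, i ≤ j → d j ≤ d i) (hd0 : ∀ i, 0 ≤ d i)
    (he : ∀ {i j : ℕ}, i ≤ j → e j ≤ e i) (he0 : ∀ i, 0 ≤ e i)
    (hS0 : ∀ i j, 0 ≤ S i j)
    (hrow : ∀ i, ∑ j ∈ range N, S i j ≤ 1)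
    (hcol : ∀ j, ∑ i ∈ range N, S i j ≤ 1) :
    ∑ i ∈ range N, ∑ j ∈ range N, d i * e j * S i j ≤ ∑ i ∈ range N, d i * e i := by
  set D : ℕ → ℝ := fun k => if k < N then d k else 0 with hD
  set E : ℕ → ℝ := fun k => if k < N then e k else 0 with hE
  set dd : ℕ → ℝ := fun k => D k - D (k + 1) with hdd
  set ee : ℕ → ℝ := fun k => E k - E (k + 1) with hee
  have hdd0 : ∀ k, 0 ≤ dd k := by
    intro k
    simp only [hdd, hD, sub_nonneg]
    by_cases h1 : k + 1 < N
    · rw [if_pos h1, if_pos (by omega)]; exact hd (Nat.le_succ k)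
    · rw [if_neg h1]
      by_cases h2 : k < N
      · rw [if_pos h2]; exact hd0 k
      · rw [if_neg h2]
  have hee0 : ∀ k, 0 ≤ ee k := by
    intro k
    simp only [hee, hE, sub_nonneg]
    by_cases h1 : k + 1 < N
    · rw [if_pos h1, if_pos (by omega)]; exact he (Nat.le_succ k)
    · rw [if_neg h1]
      by_cases h2 : k < N
      · rw [if_pos h2]; exact he0 k
      · rw [if_neg h2]
  have tel : ∀ (F : ℕ → ℝ), (∀ k, k ≥ N → F k = 0) → ∀ i, i < N →
      F i = ∑ k ∈ range N, (if i ≤ k then F k - F (k+1) else 0) := by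
    intro F hF i hi
    have h1 : ∑ k ∈ range N, (if i ≤ k then F k - F (k+1) else 0)
        = ∑ k ∈ Ico i N, (F k - F (k+1)) := by
      rw [← Finset.sum_filter]
      congr 1
      ext k
      simp only [Finset.mem_filter, Finset.mem_Ico, Finset.mem_range]
      omega
    rw [h1, Finset.sum_Ico_eq_sum_range]
    have h2 : ∀ j, F (i + j) - F (i + j + 1) = (fun j => F (i + j)) j - (fun j => F (i + j)) (j+1) := by
      intro j; simp [Nat.add_assoc]
    simp_rw [h2]
    rw [Finset.sum_range_sub' (fun j => F (i + j)) (N - i)]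
    simp only [Nat.add_zero]
    rw [hF (i + (N - i)) (by omega)]
    ring
  have telD : ∀ i, i < N → d i = ∑ k ∈ range N, (if i ≤ k then dd k else 0) := by
    intro i hi
    have := tel D (fun k hk => by simp [hD, Nat.not_lt.mpr hk]) i hi
    simpa [hD, hi, hdd] using this
  have telE : ∀ i, i < N → e i = ∑ k ∈ range N, (if i ≤ k then ee k else 0) := by
    intro i hi
    have := tel E (fun k hk => by simp [hE, Nat.not_lt.mpr hk]) i hi
    simpa [hE, hi, hee] using this
  have expand : ∀ (φ : ℕ → ℕ → ℝ),
      ∑ i ∈ range N, ∑ j ∈ range N, d i * e j * φ i j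
      = ∑ k ∈ range N, ∑ l ∈ range N, dd k * ee l *
          (∑ i ∈ range N, ∑ j ∈ range N,
            (if i ≤ k then (1:ℝ) else 0) * (if j ≤ l then (1:ℝ) else 0) * φ i j) := by
    intro φ
    have step : ∀ i ∈ range N, ∀ j ∈ range N, d i * e j * φ i j
        = ∑ k ∈ range N, ∑ l ∈ range N,
            dd k * ee l * ((if i ≤ k then (1:ℝ) else 0) * (if j ≤ l then (1:ℝ) else 0) * φ i j) := by
      intro i hi j hj
      rw [telD i (mem_range.mp hi), telE j (mem_range.mp hj), Finset.sum_mul_sum, Finset.sum_mul]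
      refine Finset.sum_congr rfl fun k _ => ?_
      rw [Finset.sum_mul]
      refine Finset.sum_congr rfl fun l _ => ?_
      by_cases h1 : i ≤ k <;> by_cases h2 : j ≤ l <;> simp [h1, h2] <;> ring
    calc ∑ i ∈ range N, ∑ j ∈ range N, d i * e j * φ i j
        = ∑ i ∈ range N, ∑ j ∈ range N, ∑ k ∈ range N, ∑ l ∈ range N,
            dd k * ee l * ((if i ≤ k then (1:ℝ) else 0) * (if j ≤ l then (1:ℝ) else 0) * φ i j) :=
          Finset.sum_congr rfl fun i hi => Finset.sum_congr rfl fun j hj => step i hi j hj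
      _ = ∑ k ∈ range N, ∑ l ∈ range N, ∑ i ∈ range N, ∑ j ∈ range N,
            dd k * ee l * ((if i ≤ k then (1:ℝ) else 0) * (if j ≤ l then (1:ℝ) else 0) * φ i j) :=
          sum4_comm _ _ _ _ _
      _ = ∑ k ∈ range N, ∑ l ∈ range N, dd k * ee l *
            (∑ i ∈ range N, ∑ j ∈ range N,
              (if i ≤ k then (1:ℝ) else 0) * (if j ≤ l then (1:ℝ) else 0) * φ i j) := by
          refine Finset.sum_congr rfl fun k _ => Finset.sum_congr rfl fun l _ => ?_
          rw [Finset.mul_sum]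
          refine Finset.sum_congr rfl fun i _ => ?_
          rw [Finset.mul_sum]
  -- counting sums of indicators
  have count : ∀ k l, k < N → l < N →
      ∑ i ∈ range N, (if i ≤ k then (1:ℝ) else 0) * (if i ≤ l then (1:ℝ) else 0)
      = (min k l : ℝ) + 1 := by
    intro k l hk hl
    have h1 : ∀ i, (if i ≤ k then (1:ℝ) else 0) * (if i ≤ l then (1:ℝ) else 0)
        = if i ≤ min k l then (1:ℝ) else 0 := by
      intro i
      by_cases h1 : i ≤ k <;> by_cases h2 : i ≤ l <;> simp [h1, h2] <;> omega
    simp_rw [h1]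
    rw [← Finset.sum_filter]
    have : (range N).filter (fun i => i ≤ min k l) = range (min k l + 1) := by
      ext i
      simp only [Finset.mem_filter, Finset.mem_range]
      omega
    rw [this]
    simp
  -- RHS as expansion of delta
  have hRHS : ∑ i ∈ range N, d i * e i
      = ∑ i ∈ range N, ∑ j ∈ range N, d i * e j * (if i = j then (1:ℝ) else 0) := by
    refine Finset.sum_congr rfl fun i hi => ?_
    rw [Finset.sum_eq_single i]
    · simp
    · intro j _ hj; simp [Ne.symm hj]
    · intro h; exact absurd hi h
  have hC : ∀ k ∈ range N, ∀ l ∈ range N,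
      (∑ i ∈ range N, ∑ j ∈ range N,
        (if i ≤ k then (1:ℝ) else 0) * (if j ≤ l then (1:ℝ) else 0) * (if i = j then (1:ℝ) else 0))
      = (min k l : ℝ) + 1 := by
    intro k hk l hl
    have inner : ∀ i ∈ range N,
        ∑ j ∈ range N, (if i ≤ k then (1:ℝ) else 0) * (if j ≤ l then (1:ℝ) else 0) * (if i = j then (1:ℝ) else 0)
        = (if i ≤ k then (1:ℝ) else 0) * (if i ≤ l then (1:ℝ) else 0) := by
      intro i hi
      rw [Finset.sum_eq_single i]
      · simp
      · intro j _ hj; simp [Ne.symm hj]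
      · intro h; exact absurd hi h
    rw [Finset.sum_congr rfl inner]
    exact count k l (mem_range.mp hk) (mem_range.mp hl)
  -- bound T k l
  have hT : ∀ k ∈ range N, ∀ l ∈ range N,
      (∑ i ∈ range N, ∑ j ∈ range N,
        (if i ≤ k then (1:ℝ) else 0) * (if j ≤ l then (1:ℝ) else 0) * S i j)
      ≤ (min k l : ℝ) + 1 := by
    intro k hk l hl
    have boundk : (∑ i ∈ range N, ∑ j ∈ range N,
        (if i ≤ k then (1:ℝ) else 0) * (if j ≤ l then (1:ℝ) else 0) * S i j) ≤ (k : ℝ) + 1 := by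
      have perI : ∀ i ∈ range N,
          ∑ j ∈ range N, (if i ≤ k then (1:ℝ) else 0) * (if j ≤ l then (1:ℝ) else 0) * S i j
          ≤ (if i ≤ k then (1:ℝ) else 0) := by
        intro i _
        by_cases h1 : i ≤ k
        · simp only [h1, if_true, one_mul]
          calc ∑ j ∈ range N, (if j ≤ l then (1:ℝ) else 0) * S i j
              ≤ ∑ j ∈ range N, S i j := by
                apply Finset.sum_le_sum
                intro j _
                by_cases h2 : j ≤ l <;> simp [h2, hS0 i j]
            _ ≤ 1 := hrow i
        · simp only [h1, if_false, zero_mul]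
          simp
      calc (∑ i ∈ range N, ∑ j ∈ range N,
            (if i ≤ k then (1:ℝ) else 0) * (if j ≤ l then (1:ℝ) else 0) * S i j)
          ≤ ∑ i ∈ range N, (if i ≤ k then (1:ℝ) else 0) := Finset.sum_le_sum perI
        _ = (k : ℝ) + 1 := by
            rw [← Finset.sum_filter]
            have : (range N).filter (fun i => i ≤ k) = range (k + 1) := by
              ext i
              simp only [Finset.mem_filter, Finset.mem_range]
              have := mem_range.mp hk
              omega
            rw [this]
            simp
    have boundl : (∑ i ∈ range N, ∑ j ∈ range N,
        (if i ≤ k then (1:ℝ) else 0) * (if j ≤ l then (1:ℝ) else 0) * S i j) ≤ (l : ℝ) + 1 := by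
      rw [Finset.sum_comm]
      have perJ : ∀ j ∈ range N,
          ∑ i ∈ range N, (if i ≤ k then (1:ℝ) else 0) * (if j ≤ l then (1:ℝ) else 0) * S i j
          ≤ (if j ≤ l then (1:ℝ) else 0) := by
        intro j _
        by_cases h2 : j ≤ l
        · simp only [h2, if_true, mul_one]
          calc ∑ i ∈ range N, (if i ≤ k then (1:ℝ) else 0) * S i j
              ≤ ∑ i ∈ range N, S i j := by
                apply Finset.sum_le_sum
                intro i _
                by_cases h1 : i ≤ k <;> simp [h1, hS0 i j]
            _ ≤ 1 := hcol j
          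
        · simp only [h2, if_false, mul_zero, zero_mul]
          simp
      calc (∑ j ∈ range N, ∑ i ∈ range N,
            (if i ≤ k then (1:ℝ) else 0) * (if j ≤ l then (1:ℝ) else 0) * S i j)
          ≤ ∑ j ∈ range N, (if j ≤ l then (1:ℝ) else 0) := Finset.sum_le_sum perJ
        _ = (l : ℝ) + 1 := by
            rw [← Finset.sum_filter]
            have : (range N).filter (fun j => j ≤ l) = range (l + 1) := by
              ext j
              simp only [Finset.mem_filter, Finset.mem_range]
              have := mem_range.mp hl
              omega
            rw [this]
            simp
    rcases le_total k l with h | h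
    · rw [min_eq_left (by exact_mod_cast h : (k:ℝ) ≤ l)]
      exact boundk
    · rw [min_eq_right (by exact_mod_cast h : (l:ℝ) ≤ k)]
      exact boundl
  -- combine
  rw [expand S, hRHS, expand (fun i j => if i = j then (1:ℝ) else 0)]
  apply Finset.sum_le_sum
  intro k hk
  apply Finset.sum_le_sum
  intro l hl
  rw [hC k hk l hl]
  have h0 : 0 ≤ dd k * ee l := mul_nonneg (hdd0 k) (hee0 l)
  exact mul_le_mul_of_nonneg_left (hT k hk l hl) h0
lemma inner_eq_dotProduct {k : ℕ} (x y : EuclideanSpace ℝ (Fin k)) :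
    (inner ℝ x y : ℝ) = (x : Fin k → ℝ) ⬝ᵥ (y : Fin k → ℝ) := by
  rw [PiLp.inner_apply]
  simp [dotProduct, mul_comm]

lemma eigen_pack {m n : ℕ} (M : Matrix (Fin m) (Fin n) ℝ) :
    ∃ (v : ℕ → (Fin n → ℝ)) (u : ℕ → (Fin m → ℝ)),
      (∀ i j, v i ⬝ᵥ v j = if i = j ∧ i < n then 1 else 0) ∧
      (∀ i j, u i ⬝ᵥ u j = if i = j ∧ sv M i ≠ 0 then 1 else 0) ∧
      (∀ i, M *ᵥ v i = sv M i • u i) ∧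
      (∀ x : Fin n → ℝ, x = ∑ i ∈ Finset.range n, (v i ⬝ᵥ x) • v i) := by
  classical
  have hN : Fintype.card (Fin n) = n := Fintype.card_fin n
  set h := Matrix.isHermitian_conjTranspose_mul_self M with hh
  set ev : Fin (Fintype.card (Fin n)) → ℝ :=
    h.eigenvalues ∘ (Fintype.equivFin (Fin n)).symm with hev
  set E : Fin (Fintype.card (Fin n)) ≃ Fin n :=
    (Fin.revPerm.trans (Tuple.sort ev)).trans (Fintype.equivFin (Fin n)).symm with hE
  set q : Fin (Fintype.card (Fin n)) → (Fin n → ℝ) :=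
    fun k => ⇑(h.eigenvectorBasis (E k)) with hq
  -- sv characterization
  have svk : ∀ k : Fin (Fintype.card (Fin n)),
      sv M (k : ℕ) = Real.sqrt (h.eigenvalues (E k)) := by
    intro k
    unfold sv
    rw [dif_pos k.isLt]
    simp only [Function.comp_apply, Fin.eta]
    congr 1
  have svnn : ∀ k : Fin (Fintype.card (Fin n)), 0 ≤ h.eigenvalues (E k) := fun k =>
    Matrix.eigenvalues_conjTranspose_mul_self_nonneg M (E k)
  have svsq : ∀ k : Fin (Fintype.card (Fin n)),
      h.eigenvalues (E k) = (sv M (k : ℕ)) ^ 2 := by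
    intro k
    rw [svk k, Real.sq_sqrt (svnn k)]
  -- orthonormality of q
  have qorth : ∀ k l, q k ⬝ᵥ q l = if k = l then (1:ℝ) else 0 := by
    intro k l
    have := h.eigenvectorBasis.orthonormal
    rw [orthonormal_iff_ite] at this
    have h2 := this (E k) (E l)
    rw [inner_eq_dotProduct] at h2
    have h3 : (if E k = E l then (1:ℝ) else 0) = if k = l then 1 else 0 := by
      simp [E.injective.eq_iff]
    rw [hq]
    exact h3 ▸ h2
  -- eigen equation
  have eigq : ∀ k, (Mᴴ * M) *ᵥ q k = ((sv M (k : ℕ)) ^ 2) • q k := by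
    intro k
    have := h.mulVec_eigenvectorBasis (E k)
    rw [← svsq k]
    exact this
  -- key adjoint identity
  have key : ∀ x y : Fin n → ℝ, (M *ᵥ x) ⬝ᵥ (M *ᵥ y) = x ⬝ᵥ ((Mᴴ * M) *ᵥ y) := by
    intro x y
    have hMt : Mᴴ = Mᵀ := by
      ext i j
      simp [Matrix.conjTranspose_apply]
    rw [← Matrix.mulVec_mulVec, hMt, Matrix.dotProduct_mulVec x Mᵀ, Matrix.vecMul_transpose]
  -- definitions of v and u
  set v : ℕ → (Fin n → ℝ) := fun i =>
    if hi : i < Fintype.card (Fin n) then q ⟨i, hi⟩ else 0 with hv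
  set u : ℕ → (Fin m → ℝ) := fun i =>
    if sv M i = 0 then 0 else (sv M i)⁻¹ • (M *ᵥ v i) with hu
  have sv_lt : ∀ i : ℕ, sv M i ≠ 0 → i < Fintype.card (Fin n) := by
    intro i hi
    by_contra hc
    exact hi (sv_eq_zero_of_ge M (Nat.not_lt.mp hc))
  -- (M v i) ⬝ (M v j)
  have mm : ∀ (i j : ℕ) (hi : i < Fintype.card (Fin n)) (hj : j < Fintype.card (Fin n)),
      (M *ᵥ v i) ⬝ᵥ (M *ᵥ v j) = if i = j then (sv M j) ^ 2 else 0 := by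
    intro i j hi hj
    rw [key, hv]
    simp only [dif_pos hi, dif_pos hj]
    rw [eigq ⟨j, hj⟩]
    rw [dotProduct_smul, qorth]
    simp only [Fin.mk.injEq, smul_eq_mul, mul_ite, mul_one, mul_zero]
  -- v orthonormality
  have vorth : ∀ i j, v i ⬝ᵥ v j = if i = j ∧ i < n then (1:ℝ) else 0 := by
    intro i j
    by_cases hi : i < Fintype.card (Fin n)
    · by_cases hj : j < Fintype.card (Fin n)
      · rw [hv]; simp only [dif_pos hi, dif_pos hj]
        rw [qorth]
        have : (⟨i, hi⟩ : Fin _) = ⟨j, hj⟩ ↔ i = j := by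
          constructor
          · intro hh2; exact congrArg Fin.val hh2
          · intro hh2; subst hh2; rfl
        by_cases hij : i = j
        · subst hij; simp [hi, hN ▸ hi]
        · rw [if_neg (fun hc => hij (congrArg Fin.val hc)), if_neg (by tauto)]
      · rw [hv]; simp only [dif_neg hj]
        rw [dotProduct_zero, if_neg]
        rintro ⟨rfl, hlt⟩
        exact hj (by omega)
    · rw [hv]; simp only [dif_neg hi]
      rw [zero_dotProduct, if_neg]
      rintro ⟨rfl, hlt⟩
      exact hi (by omega)
  -- mulVec identity
  have hmv : ∀ i, M *ᵥ v i = sv M i • u i := by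
    intro i
    by_cases hsv : sv M i = 0
    · rw [hsv, zero_smul]
      by_cases hi : i < Fintype.card (Fin n)
      · have h2 := mm i i hi hi
        rw [if_pos rfl, hsv] at h2
        simp only [ne_eq, zero_pow, OfNat.ofNat_ne_zero, not_false_eq_true] at h2
        exact (dotProduct_self_eq_zero).mp h2
      · rw [hv]; simp only [dif_neg hi, Matrix.mulVec_zero]
    · have hui : u i = (sv M i)⁻¹ • (M *ᵥ v i) := by rw [hu]; simp [hsv]
      rw [hui, smul_inv_smul₀ hsv]
  -- u orthonormality
  have uorth : ∀ i j, u i ⬝ᵥ u j = if i = j ∧ sv M i ≠ 0 then (1:ℝ) else 0 := by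
    intro i j
    by_cases hsi : sv M i = 0
    · rw [hu]
      simp only [if_pos hsi, zero_dotProduct]
      rw [if_neg (by tauto)]
    · by_cases hsj : sv M j = 0
      · rw [hu]
        simp only [if_pos hsj, if_neg hsi, dotProduct_zero]
        rw [if_neg]
        rintro ⟨rfl, -⟩
        exact hsi hsj
      · have hi := sv_lt i hsi
        have hj := sv_lt j hsj
        rw [hu]
        simp only [if_neg hsi, if_neg hsj]
        rw [smul_dotProduct, dotProduct_smul, mm i j hi hj]
        by_cases hij : i = j
        · subst hij
          rw [if_pos rfl, if_pos ⟨rfl, hsi⟩]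
          rw [smul_eq_mul, smul_eq_mul, ← mul_assoc, ← sq, ← mul_pow, inv_mul_cancel₀ hsi, one_pow]
        · rw [if_neg hij, if_neg (by tauto)]
          simp
  -- completeness
  have complete : ∀ x : Fin n → ℝ, x = ∑ i ∈ Finset.range n, (v i ⬝ᵥ x) • v i := by
    intro x
    have hrepr := h.eigenvectorBasis.sum_repr' (WithLp.toLp 2 x : EuclideanSpace ℝ (Fin n))
    have step1 : ∑ j : Fin n, (inner ℝ (h.eigenvectorBasis j) (WithLp.toLp 2 x : EuclideanSpace ℝ (Fin n)) : ℝ)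
        • (h.eigenvectorBasis j : EuclideanSpace ℝ (Fin n)) = WithLp.toLp 2 x := hrepr
    have step2 : ∑ k : Fin (Fintype.card (Fin n)),
        (q k ⬝ᵥ x) • q k = x := by
      have := Equiv.sum_comp E (fun j => (inner ℝ (h.eigenvectorBasis j) (WithLp.toLp 2 x : EuclideanSpace ℝ (Fin n)) : ℝ)
        • (h.eigenvectorBasis j : EuclideanSpace ℝ (Fin n)))
      rw [step1] at this
      have h5 := congrArg (WithLp.ofLp (p := 2)) this
      rw [WithLp.ofLp_sum] at h5
      calc ∑ k, (q k ⬝ᵥ x) • q k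
          = ∑ k, WithLp.ofLp ((inner ℝ (h.eigenvectorBasis (E k)) (WithLp.toLp 2 x : EuclideanSpace ℝ (Fin n)) : ℝ)
            • (h.eigenvectorBasis (E k) : EuclideanSpace ℝ (Fin n))) := by
            refine Finset.sum_congr rfl fun k _ => ?_
            rw [WithLp.ofLp_smul, inner_eq_dotProduct]
        _ = x := h5
    have step3 : ∑ i ∈ Finset.range (Fintype.card (Fin n)), (v i ⬝ᵥ x) • v i
        = ∑ k : Fin (Fintype.card (Fin n)), (q k ⬝ᵥ x) • q k := by
      rw [← Fin.sum_univ_eq_sum_range (fun i => (v i ⬝ᵥ x) • v i)]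
      refine Finset.sum_congr rfl fun k _ => ?_
      rw [hv]
      simp only [dif_pos k.isLt, Fin.eta]
    have hrange : Finset.range n = Finset.range (Fintype.card (Fin n)) := by rw [hN]
    rw [hrange, step3, step2]
  exact ⟨v, u, vorth, uorth, hmv, complete⟩

lemma mulVec_sum' {m n : ℕ} (A : Matrix (Fin m) (Fin n) ℝ) (s : Finset ℕ) (f : ℕ → Fin n → ℝ) :
    A *ᵥ (∑ i ∈ s, f i) = ∑ i ∈ s, A *ᵥ f i := by
  ext r
  simp only [Matrix.mulVec, Finset.sum_apply]
  exact dp_sum_right s _ f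

lemma trace_identity {m n : ℕ} (A B : Matrix (Fin m) (Fin n) ℝ) (w : ℕ → Fin n → ℝ)
    (hw : ∀ x : Fin n → ℝ, x = ∑ i ∈ Finset.range n, (w i ⬝ᵥ x) • w i) :
    ∑ i : Fin m, ∑ j : Fin n, A i j * B i j
    = ∑ k ∈ Finset.range n, (A *ᵥ w k) ⬝ᵥ (B *ᵥ w k) := by
  have parseval : ∀ x y : Fin n → ℝ,
      x ⬝ᵥ y = ∑ k ∈ Finset.range n, (w k ⬝ᵥ x) * (w k ⬝ᵥ y) := by
    intro x y
    conv_lhs => rw [hw x]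
    rw [dp_sum_left]
    refine Finset.sum_congr rfl fun k _ => ?_
    rw [smul_dotProduct, smul_eq_mul]
  have rows : ∀ i : Fin m, ∑ j : Fin n, A i j * B i j
      = ∑ k ∈ Finset.range n, (w k ⬝ᵥ (fun j => A i j)) * (w k ⬝ᵥ (fun j => B i j)) := by
    intro i
    exact parseval (fun j => A i j) (fun j => B i j)
  calc ∑ i : Fin m, ∑ j : Fin n, A i j * B i j
      = ∑ i : Fin m, ∑ k ∈ Finset.range n,
          (w k ⬝ᵥ (fun j => A i j)) * (w k ⬝ᵥ (fun j => B i j)) :=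
        Finset.sum_congr rfl fun i _ => rows i
    _ = ∑ k ∈ Finset.range n, ∑ i : Fin m,
          (w k ⬝ᵥ (fun j => A i j)) * (w k ⬝ᵥ (fun j => B i j)) := Finset.sum_comm
    _ = ∑ k ∈ Finset.range n, (A *ᵥ w k) ⬝ᵥ (B *ᵥ w k) := by
        refine Finset.sum_congr rfl fun k _ => ?_
        simp only [dotProduct, Matrix.mulVec]
        refine Finset.sum_congr rfl fun i _ => ?_
        congr 1
        · exact Finset.sum_congr rfl fun j _ => mul_comm _ _
        · exact Finset.sum_congr rfl fun j _ => mul_comm _ _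

lemma sum_sq_sv {m n : ℕ} (M : Matrix (Fin m) (Fin n) ℝ) :
    ∑ k ∈ Finset.range n, (sv M k) ^ 2 = ∑ i : Fin m, ∑ j : Fin n, (M i j) ^ 2 := by
  obtain ⟨v, u, vorth, uorth, hmv, hcomp⟩ := eigen_pack M
  have := trace_identity M M v hcomp
  simp_rw [← sq] at this
  rw [this]
  refine Finset.sum_congr rfl fun k _ => ?_
  rw [hmv k, smul_dotProduct, dotProduct_smul, uorth k k, smul_eq_mul, smul_eq_mul]
  by_cases hs : sv M k = 0
  · simp [hs]
  · simp only [hs, ne_eq, not_false_eq_true, and_self, if_true]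
    ring

lemma vonNeumann {m n : ℕ} (A B : Matrix (Fin m) (Fin n) ℝ) :
    ∑ i : Fin m, ∑ j : Fin n, A i j * B i j
    ≤ ∑ k ∈ Finset.range n, sv A k * sv B k := by
  obtain ⟨va, ua, vaorth, uaorth, hmva, hcompa⟩ := eigen_pack A
  obtain ⟨vb, ub, vborth, uborth, hmvb, hcompb⟩ := eigen_pack B
  set S : ℕ → ℕ → ℝ := fun i k => ((ua i ⬝ᵥ ub k) ^ 2 + (va i ⬝ᵥ vb k) ^ 2) / 2 with hS
  -- trace expansion
  have tr : ∑ i : Fin m, ∑ j : Fin n, A i j * B i j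
      = ∑ k ∈ Finset.range n, ∑ i ∈ Finset.range n,
          sv A i * sv B k * ((va i ⬝ᵥ vb k) * (ua i ⬝ᵥ ub k)) := by
    rw [trace_identity A B vb hcompb]
    refine Finset.sum_congr rfl fun k _ => ?_
    have expandA : A *ᵥ vb k = ∑ i ∈ Finset.range n, (va i ⬝ᵥ vb k) • (sv A i • ua i) := by
      conv_lhs => rw [hcompa (vb k)]
      rw [mulVec_sum']
      refine Finset.sum_congr rfl fun i _ => ?_
      rw [Matrix.mulVec_smul, hmva i]
    rw [expandA, hmvb k, dp_sum_left]
    refine Finset.sum_congr rfl fun i _ => ?_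
    simp only [smul_dotProduct, dotProduct_smul, smul_eq_mul]
    ring
  -- pointwise bound
  have ptwise : ∀ k ∈ Finset.range n, ∀ i ∈ Finset.range n,
      sv A i * sv B k * ((va i ⬝ᵥ vb k) * (ua i ⬝ᵥ ub k)) ≤ sv A i * sv B k * S i k := by
    intro k _ i _
    have h0 : 0 ≤ sv A i * sv B k := mul_nonneg (sv_nonneg A i) (sv_nonneg B k)
    apply mul_le_mul_of_nonneg_left _ h0
    rw [hS]
    nlinarith [sq_nonneg ((va i ⬝ᵥ vb k) - (ua i ⬝ᵥ ub k))]
  -- substochastic bounds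
  have hS0 : ∀ i k, 0 ≤ S i k := by
    intro i k
    rw [hS]
    positivity
  have hub_dp : ∀ k l : Fin n, ub (k : ℕ) ⬝ᵥ ub (l : ℕ)
      = if k = l then (if sv B (k : ℕ) = 0 then 0 else 1) else 0 := by
    intro k l
    rw [uborth]
    by_cases hkl : k = l
    · subst hkl
      by_cases hs : sv B (k : ℕ) = 0 <;> simp [hs]
    · rw [if_neg (by simp [Fin.val_eq_val, hkl]), if_neg hkl]
  have hvb_dp : ∀ k l : Fin n, vb (k : ℕ) ⬝ᵥ vb (l : ℕ)
      = if k = l then (1:ℝ) else 0 := by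
    intro k l
    rw [vborth]
    by_cases hkl : k = l
    · subst hkl; simp [k.isLt]
    · rw [if_neg (by simp [Fin.val_eq_val, hkl]), if_neg hkl]
  have hua_dp : ∀ k l : Fin n, ua (k : ℕ) ⬝ᵥ ua (l : ℕ)
      = if k = l then (if sv A (k : ℕ) = 0 then 0 else 1) else 0 := by
    intro k l
    rw [uaorth]
    by_cases hkl : k = l
    · subst hkl
      by_cases hs : sv A (k : ℕ) = 0 <;> simp [hs]
    · rw [if_neg (by simp [Fin.val_eq_val, hkl]), if_neg hkl]
  have hva_dp : ∀ k l : Fin n, va (k : ℕ) ⬝ᵥ va (l : ℕ)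
      = if k = l then (1:ℝ) else 0 := by
    intro k l
    rw [vaorth]
    by_cases hkl : k = l
    · subst hkl; simp [k.isLt]
    · rw [if_neg (by simp [Fin.val_eq_val, hkl]), if_neg hkl]
  -- Bessel applications
  have besselB_u : ∀ x : Fin m → ℝ, ∑ k ∈ Finset.range n, (ub k ⬝ᵥ x) ^ 2 ≤ x ⬝ᵥ x := by
    intro x
    have := bessel (fun k : Fin n => ub (k : ℕ))
      (fun k : Fin n => if sv B (k : ℕ) = 0 then 0 else 1)
      (fun k => by by_cases hs : sv B (k : ℕ) = 0 <;> simp [hs]) hub_dp x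
    rwa [Fin.sum_univ_eq_sum_range (fun k => (ub k ⬝ᵥ x) ^ 2) n] at this
  have besselB_v : ∀ x : Fin n → ℝ, ∑ k ∈ Finset.range n, (vb k ⬝ᵥ x) ^ 2 ≤ x ⬝ᵥ x := by
    intro x
    have := bessel (fun k : Fin n => vb (k : ℕ)) (fun _ => (1:ℝ))
      (fun k => le_refl 1) hvb_dp x
    rwa [Fin.sum_univ_eq_sum_range (fun k => (vb k ⬝ᵥ x) ^ 2) n] at this
  have besselA_u : ∀ x : Fin m → ℝ, ∑ i ∈ Finset.range n, (ua i ⬝ᵥ x) ^ 2 ≤ x ⬝ᵥ x := by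
    intro x
    have := bessel (fun k : Fin n => ua (k : ℕ))
      (fun k : Fin n => if sv A (k : ℕ) = 0 then 0 else 1)
      (fun k => by by_cases hs : sv A (k : ℕ) = 0 <;> simp [hs]) hua_dp x
    rwa [Fin.sum_univ_eq_sum_range (fun k => (ua k ⬝ᵥ x) ^ 2) n] at this
  have besselA_v : ∀ x : Fin n → ℝ, ∑ i ∈ Finset.range n, (va i ⬝ᵥ x) ^ 2 ≤ x ⬝ᵥ x := by
    intro x
    have := bessel (fun k : Fin n => va (k : ℕ)) (fun _ => (1:ℝ))
      (fun k => le_refl 1) hva_dp x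
    rwa [Fin.sum_univ_eq_sum_range (fun k => (va k ⬝ᵥ x) ^ 2) n] at this
  have hrow : ∀ i, ∑ k ∈ Finset.range n, S i k ≤ 1 := by
    intro i
    have h1 : ∑ k ∈ Finset.range n, (ua i ⬝ᵥ ub k) ^ 2 ≤ 1 := by
      have hx : ua i ⬝ᵥ ua i ≤ 1 := by
        rw [uaorth]
        split <;> norm_num
      calc ∑ k ∈ Finset.range n, (ua i ⬝ᵥ ub k) ^ 2
          = ∑ k ∈ Finset.range n, (ub k ⬝ᵥ ua i) ^ 2 := by
            refine Finset.sum_congr rfl fun k _ => ?_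
            rw [dotProduct_comm]
        _ ≤ ua i ⬝ᵥ ua i := besselB_u (ua i)
        _ ≤ 1 := hx
    have h2 : ∑ k ∈ Finset.range n, (va i ⬝ᵥ vb k) ^ 2 ≤ 1 := by
      have hx : va i ⬝ᵥ va i ≤ 1 := by
        rw [vaorth]
        split <;> norm_num
      calc ∑ k ∈ Finset.range n, (va i ⬝ᵥ vb k) ^ 2
          = ∑ k ∈ Finset.range n, (vb k ⬝ᵥ va i) ^ 2 := by
            refine Finset.sum_congr rfl fun k _ => ?_
            rw [dotProduct_comm]
        _ ≤ va i ⬝ᵥ va i := besselB_v (va i)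
        _ ≤ 1 := hx
    simp only [hS]
    calc ∑ k ∈ Finset.range n, ((ua i ⬝ᵥ ub k) ^ 2 + (va i ⬝ᵥ vb k) ^ 2) / 2
        = ((∑ k ∈ Finset.range n, (ua i ⬝ᵥ ub k) ^ 2)
            + ∑ k ∈ Finset.range n, (va i ⬝ᵥ vb k) ^ 2) / 2 := by
          rw [← Finset.sum_div, Finset.sum_add_distrib]
      _ ≤ (1 + 1) / 2 := by linarith
      _ = 1 := by norm_num
  have hcol : ∀ k, ∑ i ∈ Finset.range n, S i k ≤ 1 := by
    intro k
    have h1 : ∑ i ∈ Finset.range n, (ua i ⬝ᵥ ub k) ^ 2 ≤ 1 := by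
      have hx : ub k ⬝ᵥ ub k ≤ 1 := by
        rw [uborth]
        split <;> norm_num
      calc ∑ i ∈ Finset.range n, (ua i ⬝ᵥ ub k) ^ 2
          ≤ ub k ⬝ᵥ ub k := besselA_u (ub k)
        _ ≤ 1 := hx
    have h2 : ∑ i ∈ Finset.range n, (va i ⬝ᵥ vb k) ^ 2 ≤ 1 := by
      have hx : vb k ⬝ᵥ vb k ≤ 1 := by
        rw [vborth]
        split <;> norm_num
      calc ∑ i ∈ Finset.range n, (va i ⬝ᵥ vb k) ^ 2
          ≤ vb k ⬝ᵥ vb k := besselA_v (vb k)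
        _ ≤ 1 := hx
    simp only [hS]
    calc ∑ i ∈ Finset.range n, ((ua i ⬝ᵥ ub k) ^ 2 + (va i ⬝ᵥ vb k) ^ 2) / 2
        = ((∑ i ∈ Finset.range n, (ua i ⬝ᵥ ub k) ^ 2)
            + ∑ i ∈ Finset.range n, (va i ⬝ᵥ vb k) ^ 2) / 2 := by
          rw [← Finset.sum_div, Finset.sum_add_distrib]
      _ ≤ (1 + 1) / 2 := by linarith
      _ = 1 := by norm_num
  calc ∑ i : Fin m, ∑ j : Fin n, A i j * B i j
      = ∑ k ∈ Finset.range n, ∑ i ∈ Finset.range n,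
          sv A i * sv B k * ((va i ⬝ᵥ vb k) * (ua i ⬝ᵥ ub k)) := tr
    _ ≤ ∑ k ∈ Finset.range n, ∑ i ∈ Finset.range n, sv A i * sv B k * S i k :=
        Finset.sum_le_sum fun k hk => Finset.sum_le_sum fun i hi => ptwise k hk i hi
    _ = ∑ i ∈ Finset.range n, ∑ k ∈ Finset.range n, sv A i * sv B k * S i k := Finset.sum_comm
    _ ≤ ∑ i ∈ Finset.range n, sv A i * sv B i :=
        layer_cake n (sv A) (sv B) S
          (fun {i j} h => sv_antitone A h) (sv_nonneg A)
          (fun {i j} h => sv_antitone B h) (sv_nonneg B)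
          hS0 hrow hcol

/-- Mirsky's inequality, Frobenius case:
`√(∑ᵢ (σᵢ(A) - σᵢ(B))²) ≤ ‖A - B‖_F`. -/
theorem mirsky_frobenius {m n : ℕ} (A B : Matrix (Fin m) (Fin n) ℝ) :
    Real.sqrt (∑ i ∈ Finset.range (min m n), (sv A i - sv B i) ^ 2) ≤ frob (A - B) := by
  unfold frob
  apply Real.sqrt_le_sqrt
  have h1 : ∑ i ∈ Finset.range (min m n), (sv A i - sv B i) ^ 2
      ≤ ∑ i ∈ Finset.range n, (sv A i - sv B i) ^ 2 :=
    Finset.sum_le_sum_of_subset_of_nonneg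
      (Finset.range_subset_range.mpr (min_le_right m n)) (fun i _ _ => sq_nonneg _)
  have h2 : ∑ i ∈ Finset.range n, (sv A i - sv B i) ^ 2
      = ∑ i ∈ Finset.range n, (sv A i) ^ 2 + ∑ i ∈ Finset.range n, (sv B i) ^ 2
        - 2 * ∑ i ∈ Finset.range n, sv A i * sv B i := by
    rw [Finset.mul_sum, ← Finset.sum_add_distrib, ← Finset.sum_sub_distrib]
    exact Finset.sum_congr rfl fun i _ => by ring
  have h3 : ∀ i : Fin m, ∑ j : Fin n, ((A - B) i j) ^ 2
      = ∑ j : Fin n, (A i j) ^ 2 + ∑ j : Fin n, (B i j) ^ 2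
        - 2 * ∑ j : Fin n, A i j * B i j := by
    intro i
    rw [Finset.mul_sum, ← Finset.sum_add_distrib, ← Finset.sum_sub_distrib]
    refine Finset.sum_congr rfl fun j _ => ?_
    rw [Matrix.sub_apply]
    ring
  have h4 : ∑ i : Fin m, ∑ j : Fin n, ((A - B) i j) ^ 2
      = ∑ i : Fin m, ∑ j : Fin n, (A i j) ^ 2 + ∑ i : Fin m, ∑ j : Fin n, (B i j) ^ 2
        - 2 * ∑ i : Fin m, ∑ j : Fin n, A i j * B i j := by
    rw [Finset.mul_sum, ← Finset.sum_add_distrib, ← Finset.sum_sub_distrib]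
    exact Finset.sum_congr rfl fun i _ => h3 i
  have hA := sum_sq_sv A
  have hB := sum_sq_sv B
  have hVN := vonNeumann A B
  linarith [h1, h2, h4, hA, hB, hVN]
end
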